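/- arXiv:1901.08924 — 7 statements merged into one kernel-verified Lean document; each statement's English description precedes it below -/
import Mathlib

section
/- Let f₁, …, f_n : ℝ^d → ℝ be differentiable and each L-smooth, and let f(x) = (1/n)∑_{j=1}^n f_j(x). Fix x, x̃ ∈ ℝ^d and let j₁, …, j_B be independent random indices, each uniformly distributed on {1,…,n}. Define the variance-reduced gradient estimator g = (1/B)∑_{a=1}^B [∇f_{j_a}(x) − ∇f_{j_a}(x̃)] + ∇f(x̃). Then E‖g − ∇f(x)‖² ≤ (L²/B)·‖x − x̃‖². -/
/-!
Write `z j = ∇f_j(x) - ∇f_j(x̃)`. Since `∇f` is the average of the `∇f_j`, the error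
`g - ∇f(x)` is the sample mean of the centred vectors `v j = z j - mean z` at the indices
`j_1, …, j_B`. The `v (j_a)` are pairwise independent with mean zero, so the cross terms of
`E‖∑ v (j_a)‖²` vanish and the error has second moment `(1/B) mean ‖v‖²`. Centring does not
increase the second moment, `mean ‖v‖² ≤ mean ‖z‖²`, and `‖z j‖ ≤ L ‖x - x̃‖` by smoothness.
-/

open MeasureTheory ProbabilityTheory
open scoped ProbabilityTheory BigOperators ENNReal RealInnerProductSpace

section Gradient

variable {F : Type*} [NormedAddCommGroup F] [InnerProductSpace ℝ F] [CompleteSpace F]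
  {f : F → ℝ} {f' x : F}

theorem HasGradientAt.fun_sum {ι : Type*} {s : Finset ι} {A : ι → F → ℝ} {A' : ι → F}
    (h : ∀ i ∈ s, HasGradientAt (A i) (A' i) x) :
    HasGradientAt (fun y => ∑ i ∈ s, A i y) (∑ i ∈ s, A' i) x := by
  rw [hasGradientAt_iff_hasFDerivAt, map_sum]
  exact HasFDerivAt.fun_sum fun i hi => (h i hi).hasFDerivAt

theorem HasGradientAt.const_mul (h : HasGradientAt f f' x) (c : ℝ) :
    HasGradientAt (fun y => c * f y) (c • f') x := by
  rw [hasGradientAt_iff_hasFDerivAt, map_smul]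
  exact h.hasFDerivAt.const_mul c

end Gradient

theorem sum_sub_average_eq_zero {α E : Type*} [Fintype α] [AddCommGroup E] [Module ℝ E]
    (z : α → E) : ∑ k, (z k - (Fintype.card α : ℝ)⁻¹ • ∑ j, z j) = 0 := by
  cases isEmpty_or_nonempty α
  · simp
  · rw [Finset.sum_sub_distrib, Finset.sum_const, Finset.card_univ, ← Nat.cast_smul_eq_nsmul ℝ,
      smul_smul, mul_inv_cancel₀ (by positivity), one_smul, sub_self]

theorem sum_norm_sub_average_sq_le {α F : Type*} [Fintype α] [NormedAddCommGroup F]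
    [InnerProductSpace ℝ F] (z : α → F) :
    ∑ k, ‖z k - (Fintype.card α : ℝ)⁻¹ • ∑ j, z j‖ ^ 2 ≤ ∑ k, ‖z k‖ ^ 2 := by
  set n : ℝ := (Fintype.card α : ℝ)
  have hexpand : ∑ k, ‖z k - n⁻¹ • ∑ j, z j‖ ^ 2 = ∑ k, ‖z k‖ ^ 2 - n⁻¹ * ‖∑ j, z j‖ ^ 2 := by
    simp only [norm_sub_sq_real, Finset.sum_add_distrib, Finset.sum_sub_distrib, ← Finset.mul_sum,
      ← sum_inner, Finset.sum_const, Finset.card_univ, nsmul_eq_mul, real_inner_smul_right,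
      norm_smul, mul_pow, real_inner_self_eq_norm_sq, Real.norm_eq_abs, sq_abs]
    by_cases hn : n = 0
    · simp [hn]
    · field_simp; ring
  rw [hexpand]
  have : 0 ≤ n⁻¹ * ‖∑ j, z j‖ ^ 2 := by positivity
  linarith

section UniformSampling

variable {Ω α : Type*} {mΩ : MeasurableSpace Ω} {μ : Measure Ω}
  [Fintype α] [MeasurableSpace α] [MeasurableSingletonClass α]

theorem measure_prodMk_eq_of_indepFun_uniform {X Y : Ω → α} (hXY : IndepFun X Y μ)
    (hX : ∀ k, μ {ω | X ω = k} = (Fintype.card α : ℝ≥0∞)⁻¹)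
    (hY : ∀ k, μ {ω | Y ω = k} = (Fintype.card α : ℝ≥0∞)⁻¹) (p : α × α) :
    μ {ω | (X ω, Y ω) = p} = (Fintype.card (α × α) : ℝ≥0∞)⁻¹ := by
  have hset : {ω | (X ω, Y ω) = p} = X ⁻¹' {p.1} ∩ Y ⁻¹' {p.2} := by
    ext ω; simp [Prod.ext_iff]
  rw [hset, hXY.measure_inter_preimage_eq_mul _ _ (measurableSet_singleton _)
    (measurableSet_singleton _), Fintype.card_prod, Nat.cast_mul,
    ENNReal.mul_inv (.inr (ENNReal.natCast_ne_top _)) (.inl (ENNReal.natCast_ne_top _))]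
  exact congr_arg₂ _ (hX p.1) (hY p.2)

variable [IsFiniteMeasure μ]

theorem integrable_comp_of_finite {E : Type*} [NormedAddCommGroup E] {X : Ω → α}
    (hX : Measurable X) (φ : α → E) : Integrable (fun ω => φ (X ω)) μ :=
  (integrable_map_measure AEStronglyMeasurable.of_discrete hX.aemeasurable).mp
    .of_finite

variable {E : Type*} [NormedAddCommGroup E] [NormedSpace ℝ E] [CompleteSpace E]

theorem integral_comp_eq_sum_measureReal {X : Ω → α} (hX : Measurable X) (φ : α → E) :
    ∫ ω, φ (X ω) ∂μ = ∑ k, μ.real {ω | X ω = k} • φ k := by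
  rw [← integral_map hX.aemeasurable AEStronglyMeasurable.of_discrete,
    integral_fintype .of_finite]
  simp only [map_measureReal_apply hX (measurableSet_singleton _)]
  rfl

theorem integral_comp_of_uniform {X : Ω → α} (hX : Measurable X)
    (hunif : ∀ k, μ {ω | X ω = k} = (Fintype.card α : ℝ≥0∞)⁻¹) (φ : α → E) :
    ∫ ω, φ (X ω) ∂μ = (Fintype.card α : ℝ)⁻¹ • ∑ k, φ k := by
  simp [integral_comp_eq_sum_measureReal hX, measureReal_def, hunif, Finset.smul_sum]

variable {F : Type*} [NormedAddCommGroup F] [InnerProductSpace ℝ F]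

theorem integral_inner_comp_of_indepFun_uniform {X Y : Ω → α} (hX : Measurable X)
    (hY : Measurable Y) (hXY : IndepFun X Y μ)
    (hXunif : ∀ k, μ {ω | X ω = k} = (Fintype.card α : ℝ≥0∞)⁻¹)
    (hYunif : ∀ k, μ {ω | Y ω = k} = (Fintype.card α : ℝ≥0∞)⁻¹) (v w : α → F) :
    ∫ ω, ⟪v (X ω), w (Y ω)⟫ ∂μ =
      ⟪(Fintype.card α : ℝ)⁻¹ • ∑ k, v k, (Fintype.card α : ℝ)⁻¹ • ∑ k, w k⟫ := by
  rw [integral_comp_of_uniform (hX.prodMk hY)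
    (measure_prodMk_eq_of_indepFun_uniform hXY hXunif hYunif) fun p => ⟪v p.1, w p.2⟫,
    real_inner_smul_left, real_inner_smul_right, sum_inner, Fintype.sum_prod_type,
    Fintype.card_prod, Nat.cast_mul, mul_inv, smul_eq_mul, mul_assoc]
  simp only [inner_sum]

theorem integral_norm_sum_sq_of_pairwise_indepFun_uniform {ι : Type*} [Fintype ι]
    {J : ι → Ω → α} (hJ : ∀ a, Measurable (J a))
    (hindep : Pairwise fun a b => IndepFun (J a) (J b) μ)
    (hunif : ∀ a k, μ {ω | J a ω = k} = (Fintype.card α : ℝ≥0∞)⁻¹)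
    {v : α → F} (hv : ∑ k, v k = 0) :
    ∫ ω, ‖∑ a, v (J a ω)‖ ^ 2 ∂μ =
      Fintype.card ι * ((Fintype.card α : ℝ)⁻¹ * ∑ k, ‖v k‖ ^ 2) := by
  have hintegrable : ∀ a b, Integrable (fun ω => ⟪v (J a ω), v (J b ω)⟫) μ := fun a b =>
    integrable_comp_of_finite ((hJ a).prodMk (hJ b)) fun p => ⟪v p.1, v p.2⟫
  have hdiag : ∀ a, ∫ ω, ‖v (J a ω)‖ ^ 2 ∂μ = (Fintype.card α : ℝ)⁻¹ * ∑ k, ‖v k‖ ^ 2 :=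
    fun a => integral_comp_of_uniform (hJ a) (hunif a) fun k => ‖v k‖ ^ 2
  have hoff : ∀ a b, a ≠ b → ∫ ω, ⟪v (J a ω), v (J b ω)⟫ ∂μ = 0 := fun a b hab => by
    rw [integral_inner_comp_of_indepFun_uniform (hJ a) (hJ b) (hindep hab) (hunif a) (hunif b),
      hv, smul_zero, inner_zero_left]
  have hexpand : ∀ ω, ‖∑ a, v (J a ω)‖ ^ 2 = ∑ a, ∑ b, ⟪v (J a ω), v (J b ω)⟫ := fun ω => by
    rw [← real_inner_self_eq_norm_sq, sum_inner]
    simp only [inner_sum]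
  simp only [hexpand]
  rw [integral_finsetSum _ fun a _ => integrable_finsetSum _ fun b _ => hintegrable a b]
  simp only [integral_finsetSum _ fun b _ => hintegrable _ b]
  rw [Finset.sum_congr rfl fun a _ => Finset.sum_eq_single_of_mem a (Finset.mem_univ a)
    fun b _ hba => hoff a b hba.symm]
  simp only [real_inner_self_eq_norm_sq, hdiag, Finset.sum_const, Finset.card_univ, nsmul_eq_mul]

end UniformSampling

/-- **Mini-batch SVRG variance bound (Lemma 4 of the supplementary).** With `B` indices sampled
uniformly and independently from `{1,…,n}`, the mini-batch variance-reduced estimator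
`g = (1/B)∑_a [∇f_{j_a}(x) - ∇f_{j_a}(x̃)] + ∇f(x̃)` of `∇f(x)` satisfies
`E‖g - ∇f(x)‖² ≤ (L²/B)‖x - x̃‖²`. -/
theorem svrg_minibatch_variance_bound
    {Ω : Type*} [MeasureSpace Ω] [IsProbabilityMeasure (ℙ : Measure Ω)]
    {d n B : ℕ} (hn : 0 < n) (hB : 0 < B) (L : ℝ)
    (f : Fin n → EuclideanSpace ℝ (Fin d) → ℝ)
    (g : Fin n → EuclideanSpace ℝ (Fin d) → EuclideanSpace ℝ (Fin d))
    (hgrad : ∀ j x, HasGradientAt (f j) (g j x) x)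
    (hsmooth : ∀ j x y, ‖g j x - g j y‖ ≤ L * ‖x - y‖)
    (gF : EuclideanSpace ℝ (Fin d) → EuclideanSpace ℝ (Fin d))
    (hgF : ∀ x, HasGradientAt (fun y => (n : ℝ)⁻¹ * ∑ j, f j y) (gF x) x)
    (x xt : EuclideanSpace ℝ (Fin d))
    (J : Fin B → Ω → Fin n) (hJmeas : ∀ a, Measurable (J a))
    (hJindep : iIndepFun J ℙ)
    (hJunif : ∀ a k, ℙ {ω | J a ω = k} = (n : ℝ≥0∞)⁻¹) :
    ∫ ω, ‖(B : ℝ)⁻¹ • ∑ a, (g (J a ω) x - g (J a ω) xt) + gF xt - gF x‖ ^ 2 ≤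
      L ^ 2 / (B : ℝ) * ‖x - xt‖ ^ 2 := by
  have hgF_eq : ∀ y, gF y = (n : ℝ)⁻¹ • ∑ j, g j y := fun y =>
    (hgF y).unique ((HasGradientAt.fun_sum fun j _ => hgrad j y).const_mul _)
  set z : Fin n → EuclideanSpace ℝ (Fin d) := fun j => g j x - g j xt
  set v : Fin n → EuclideanSpace ℝ (Fin d) := fun j => z j - (n : ℝ)⁻¹ • ∑ k, z k
  have hmean : gF x - gF xt = (n : ℝ)⁻¹ • ∑ k, z k := by
    simp only [z, hgF_eq, Finset.sum_sub_distrib, smul_sub]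
  have herror : ∀ ω, (B : ℝ)⁻¹ • ∑ a, (g (J a ω) x - g (J a ω) xt) + gF xt - gF x =
      (B : ℝ)⁻¹ • ∑ a, v (J a ω) := fun ω => by
    have hB' : (B : ℝ) ≠ 0 := Nat.cast_ne_zero.mpr hB.ne'
    simp only [v, Finset.sum_sub_distrib, Finset.sum_const, Finset.card_univ, Fintype.card_fin,
      ← Nat.cast_smul_eq_nsmul ℝ, smul_sub, smul_smul, inv_mul_cancel₀ hB', one_smul, ← hmean]
    simp only [z, Finset.sum_sub_distrib, smul_sub]
    abel
  have hunif : ∀ a k, ℙ {ω | J a ω = k} = (Fintype.card (Fin n) : ℝ≥0∞)⁻¹ := by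
    simpa only [Fintype.card_fin] using hJunif
  have hv : ∑ k, v k = 0 := by
    simpa only [Fintype.card_fin] using sum_sub_average_eq_zero z
  have hvz : ∑ j, ‖v j‖ ^ 2 ≤ ∑ j, ‖z j‖ ^ 2 := by
    simpa only [Fintype.card_fin] using sum_norm_sub_average_sq_le z
  calc ∫ ω, ‖(B : ℝ)⁻¹ • ∑ a, (g (J a ω) x - g (J a ω) xt) + gF xt - gF x‖ ^ 2
      = (B : ℝ)⁻¹ ^ 2 * ∫ ω, ‖∑ a, v (J a ω)‖ ^ 2 := by
        simp only [herror, norm_smul, mul_pow, Real.norm_eq_abs, sq_abs, integral_const_mul]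
    _ = (B : ℝ)⁻¹ * ((n : ℝ)⁻¹ * ∑ j, ‖v j‖ ^ 2) := by
        rw [integral_norm_sum_sq_of_pairwise_indepFun_uniform hJmeas
          (fun a b hab => hJindep.indepFun hab) hunif hv]
        simp only [Fintype.card_fin]
        field_simp
    _ ≤ (B : ℝ)⁻¹ * ((n : ℝ)⁻¹ * ∑ j : Fin n, (L * ‖x - xt‖) ^ 2) := by
        gcongr (B : ℝ)⁻¹ * ((n : ℝ)⁻¹ * ?_)
        exact hvz.trans (Finset.sum_le_sum fun j _ => by gcongr; exact hsmooth j x xt)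
    _ = L ^ 2 / (B : ℝ) * ‖x - xt‖ ^ 2 := by
        have hn' : (n : ℝ) ≠ 0 := Nat.cast_ne_zero.mpr hn.ne'
        simp only [Finset.sum_const, Finset.card_univ, Fintype.card_fin, nsmul_eq_mul]
        field_simp
end

section
/- Let f₁, …, f_n : ℝ^d → ℝ be differentiable and each L-smooth, f(x) = (1/n)∑_{j=1}^n f_j(x), and fix x, x̃ ∈ ℝ^d. For each worker i = 1,…,N let u_i = (1/B)∑_{a∈I_i}[∇f_a(x) − ∇f_a(x̃)], where the mini-batches I_i consist of B indices sampled uniformly and independently (with replacement, and independently across workers) from {1,…,n}. Let λ ∈ (0,1], integer b ≥ 2, integer 0 ≤ d_λ ≤ d, and δ = λ·max_j‖u_j‖_∞/(2^{b−1}−1). Let Y_1,…,Y_N be random vectors with E[‖Y_i − u_i‖² | I_1,…,I_N] ≤ [d·λ²/(4(2^{b−1}−1)²) + d_λ(1−λ)²]·max_j‖u_j‖² for each i, and let Y₀ be a random vector (the re-quantization of the average) with E[Y₀ | I_1,…,I_N, Y_1,…,Y_N] = (1/N)∑_i Y_i and E[‖Y₀ − (1/N)∑_i Y_i‖² | I_1,…,I_N,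 Y_1,…,Y_N] ≤ d·δ²/4. Set v = Y₀ + ∇f(x̃). Then E‖v − ∇f(x)‖² ≤ 2L²·[3d·λ²/(8(2^{b−1}−1)²) + d_λ(1−λ)² + 1/(NB)]·‖x − x̃‖². -/
open MeasureTheory ProbabilityTheory
open scoped ProbabilityTheory BigOperators ENNReal

section LpcAux

variable {Ω : Type*} [MeasureSpace Ω] [IsProbabilityMeasure (ℙ : Measure Ω)]

lemma lpc_integrable_of_bound {h : Ω → ℝ} (hm : AEStronglyMeasurable h ℙ) (C : ℝ)
    (hb : ∀ ω, |h ω| ≤ C) : Integrable h ℙ :=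
  Integrable.mono' (integrable_const C) hm (Filter.Eventually.of_forall
    (by simpa [Real.norm_eq_abs] using hb))

lemma lpc_integrable_mul_of_sq {f g : Ω → ℝ} (hf : AEStronglyMeasurable f ℙ)
    (hg : AEStronglyMeasurable g ℙ)
    (hf2 : Integrable (fun ω => f ω ^ 2) ℙ) (hg2 : Integrable (fun ω => g ω ^ 2) ℙ) :
    Integrable (fun ω => f ω * g ω) ℙ := by
  refine Integrable.mono' ((hf2.add hg2).div_const 2) (hf.mul hg) ?_
  filter_upwards with ω
  rw [Real.norm_eq_abs]
  simp only [Pi.add_apply]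
  rcases abs_cases (f ω * g ω) with ⟨h, _⟩ | ⟨h, _⟩ <;> rw [h] <;>
    nlinarith [sq_nonneg (f ω - g ω), sq_nonneg (f ω + g ω)]

lemma lpc_integral_comp_fin {n : ℕ} (J : Ω → Fin n) (hJ : Measurable J) (T : Fin n → ℝ)
    (hJunif : ∀ k, ℙ {ω | J ω = k} = (n : ℝ≥0∞)⁻¹) :
    ∫ ω, T (J ω) = (n : ℝ)⁻¹ * ∑ k, T k := by
  have hmeas : ∀ k : Fin n, MeasurableSet {ω | J ω = k} := fun k =>
    hJ (measurableSet_singleton k)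
  have h1 : ∀ ω, T (J ω) = ∑ k, Set.indicator {ω' | J ω' = k} (fun _ => T k) ω := by
    intro ω
    rw [Finset.sum_eq_single (J ω)]
    · rw [Set.indicator_of_mem]; exact rfl
    · intro k _ hk
      exact Set.indicator_of_notMem (fun h => hk ((Set.mem_setOf_eq ▸ h).symm)) _
    · intro h; exact absurd (Finset.mem_univ _) h
  simp_rw [h1]
  rw [integral_finset_sum _ fun k _ => (integrable_const (T k)).indicator (hmeas k)]
  rw [Finset.mul_sum]
  refine Finset.sum_congr rfl fun k _ => ?_
  rw [integral_indicator_const _ (hmeas k), measureReal_def, hJunif k, smul_eq_mul]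
  congr 1
  simp [ENNReal.toReal_inv]

lemma lpc_norm_sq_eq_sum {d : ℕ} (z : EuclideanSpace ℝ (Fin d)) :
    ‖z‖ ^ 2 = ∑ c, (z c) ^ 2 := by
  rw [EuclideanSpace.norm_eq, Real.sq_sqrt (by positivity)]
  simp [sq_abs]

end LpcAux

def lpcm1 {Ω : Type*} {n N B : ℕ} (I : Fin N → Fin B → Ω → Fin n) : MeasurableSpace Ω :=
  ⨆ p : Fin N × Fin B, MeasurableSpace.comap (I p.1 p.2) inferInstance

def lpcm {Ω : Type*} {d n N B : ℕ} (I : Fin N → Fin B → Ω → Fin n)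
    (Y : Fin N → Ω → EuclideanSpace ℝ (Fin d)) : MeasurableSpace Ω :=
  lpcm1 I ⊔ ⨆ i, MeasurableSpace.comap (Y i) inferInstance
set_option maxHeartbeats 2000000 in
/-- **Variance bound for the re-quantized parameter-server estimator (Lemma 2(ii)).**
Each of `N` workers quantizes its mini-batch variance-reduced gradient `u_i` with the common
scale factor `δ = λ·max_j‖u_j‖_∞/(2^{b-1}-1)`; the server re-quantizes the average of the
received low-precision vectors unbiasedly with the same scale factor (per-coordinate variance
at most `δ²/4`).  Then `v = Y₀ + ∇f(x̃)` satisfies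
`E‖v - ∇f(x)‖² ≤ 2L²[3dλ²/(8(2^{b-1}-1)²) + d_λ(1-λ)² + 1/(NB)]‖x - x̃‖²`. -/
theorem lpc_svrg_requantized_variance_bound
    {Ω : Type*} [MeasureSpace Ω] [IsProbabilityMeasure (ℙ : Measure Ω)]
    {d n N B : ℕ} (hn : 0 < n) (hN : 0 < N) (hB : 0 < B)
    (b dlam : ℕ) (hb : 2 ≤ b) (hdlam : dlam ≤ d)
    (lam : ℝ) (hlam : lam ∈ Set.Ioc (0 : ℝ) 1) (L : ℝ)
    (f : Fin n → EuclideanSpace ℝ (Fin d) → ℝ)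
    (g : Fin n → EuclideanSpace ℝ (Fin d) → EuclideanSpace ℝ (Fin d))
    (hgrad : ∀ j x, HasGradientAt (f j) (g j x) x)
    (hsmooth : ∀ j x y, ‖g j x - g j y‖ ≤ L * ‖x - y‖)
    (gF : EuclideanSpace ℝ (Fin d) → EuclideanSpace ℝ (Fin d))
    (hgF : ∀ x, HasGradientAt (fun y => (n : ℝ)⁻¹ * ∑ j, f j y) (gF x) x)
    (x xt : EuclideanSpace ℝ (Fin d))
    -- the mini-batch index samples of the `N` workers
    (I : Fin N → Fin B → Ω → Fin n) (hImeas : ∀ i a, Measurable (I i a))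
    (hIindep : iIndepFun (fun p : Fin N × Fin B => I p.1 p.2) ℙ)
    (hIunif : ∀ i a k, ℙ {ω | I i a ω = k} = (n : ℝ≥0∞)⁻¹)
    -- the variance-reduced local gradients
    (u : Fin N → Ω → EuclideanSpace ℝ (Fin d))
    (hu : ∀ i ω, u i ω = (B : ℝ)⁻¹ • ∑ a, (g (I i a ω) x - g (I i a ω) xt))
    -- the common scale factor `δ = λ·max_j ‖u_j‖_∞ / (2^{b-1} - 1)`
    (δ : Ω → ℝ)
    (hδ : ∀ ω, δ ω = lam * (⨆ j, ⨆ c, |u j ω c|) / ((2 : ℝ) ^ (b - 1) - 1))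
    -- the workers' quantized gradients
    (Y : Fin N → Ω → EuclideanSpace ℝ (Fin d)) (hYmeas : ∀ i, Measurable (Y i))
    (hYint : ∀ i, Integrable fun ω => ‖Y i ω - u i ω‖ ^ 2)
    (hYcond : ∀ i, ∀ᵐ ω ∂ℙ,
      (ℙ[fun ω' => ‖Y i ω' - u i ω'‖ ^ 2 |
          ⨆ p : Fin N × Fin B, MeasurableSpace.comap (I p.1 p.2) inferInstance]) ω ≤
        ((d : ℝ) * lam ^ 2 / (4 * ((2 : ℝ) ^ (b - 1) - 1) ^ 2) +
            (dlam : ℝ) * (1 - lam) ^ 2) * (⨆ j, ‖u j ω‖ ^ 2))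
    -- the server's unbiased re-quantization of the average
    (Y₀ : Ω → EuclideanSpace ℝ (Fin d)) (hY₀meas : Measurable Y₀)
    (hY₀int : Integrable Y₀)
    (hY₀sqint : Integrable fun ω => ‖Y₀ ω - (N : ℝ)⁻¹ • ∑ i, Y i ω‖ ^ 2)
    (hY₀mean :
      (ℙ[Y₀ | (⨆ p : Fin N × Fin B, MeasurableSpace.comap (I p.1 p.2) inferInstance) ⊔
          ⨆ i, MeasurableSpace.comap (Y i) inferInstance]) =ᵐ[ℙ]
        fun ω => (N : ℝ)⁻¹ • ∑ i, Y i ω)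
    (hY₀var : ∀ᵐ ω ∂ℙ,
      (ℙ[fun ω' => ‖Y₀ ω' - (N : ℝ)⁻¹ • ∑ i, Y i ω'‖ ^ 2 |
          (⨆ p : Fin N × Fin B, MeasurableSpace.comap (I p.1 p.2) inferInstance) ⊔
            ⨆ i, MeasurableSpace.comap (Y i) inferInstance]) ω ≤
        (d : ℝ) * (δ ω) ^ 2 / 4) :
    ∫ ω, ‖Y₀ ω + gF xt - gF x‖ ^ 2 ≤
      2 * L ^ 2 *
          (3 * (d : ℝ) * lam ^ 2 / (8 * ((2 : ℝ) ^ (b - 1) - 1) ^ 2) +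
            (dlam : ℝ) * (1 - lam) ^ 2 + 1 / ((N : ℝ) * (B : ℝ))) *
        ‖x - xt‖ ^ 2 := by
  classical
  have hNE : Nonempty (Fin N) := ⟨⟨0, hN⟩⟩
  have hnE : Nonempty (Fin n) := ⟨⟨0, hn⟩⟩
  have hn0 : ((n : ℝ)) ≠ 0 := Nat.cast_ne_zero.mpr hn.ne'
  have hN0 : ((N : ℝ)) ≠ 0 := Nat.cast_ne_zero.mpr hN.ne'
  have hB0 : ((B : ℝ)) ≠ 0 := Nat.cast_ne_zero.mpr hB.ne'
  have hm1 : lpcm1 I ≤ (inferInstance : MeasurableSpace Ω) := by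
    refine iSup_le fun p => ?_
    exact measurable_iff_comap_le.mp (hImeas p.1 p.2)
  have hm : lpcm I Y ≤ (inferInstance : MeasurableSpace Ω) := by
    refine sup_le hm1 (iSup_le fun i => ?_)
    exact measurable_iff_comap_le.mp (hYmeas i)
  -- constants
  set K : ℝ := (2 : ℝ) ^ (b - 1) - 1 with hKdef
  have hK1 : (1 : ℝ) ≤ K := by
    have h2 : (2 : ℝ) ^ 1 ≤ (2 : ℝ) ^ (b - 1) :=
      pow_le_pow_right₀ one_le_two (by omega)
    simp only [pow_one] at h2
    simp only [hKdef]; linarith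
  have hK0 : K ≠ 0 := by linarith
  have hlam0 : (0 : ℝ) < lam := hlam.1
  set s : ℝ := ‖x - xt‖ ^ 2 with hsdef
  have hs0 : 0 ≤ s := sq_nonneg _
  set Cw : ℝ := (d : ℝ) * lam ^ 2 / (4 * K ^ 2) + (dlam : ℝ) * (1 - lam) ^ 2 with hCwdef
  have hCw0 : 0 ≤ Cw := by positivity
  -- gradient structure
  set v : Fin n → EuclideanSpace ℝ (Fin d) := fun k => g k x - g k xt with hvdef
  set D : EuclideanSpace ℝ (Fin d) := (n : ℝ)⁻¹ • ∑ j, v j with hDdef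
  have hgFeq : ∀ y, gF y = (n : ℝ)⁻¹ • ∑ j, g j y := by
    intro y
    refine (hgF y).unique ?_
    rw [hasGradientAt_iff_hasFDerivAt]
    have h2 : HasFDerivAt (fun z => ∑ j, f j z)
        (∑ j, (InnerProductSpace.toDual ℝ (EuclideanSpace ℝ (Fin d)) (g j y) :
          EuclideanSpace ℝ (Fin d) →L[ℝ] ℝ)) y :=
      HasFDerivAt.fun_sum fun j _ => (hgrad j y).hasFDerivAt
    have h1 := h2.const_mul ((n : ℝ)⁻¹)
    have h3 : ((InnerProductSpace.toDual ℝ (EuclideanSpace ℝ (Fin d)))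
        ((n : ℝ)⁻¹ • ∑ j, g j y) : EuclideanSpace ℝ (Fin d) →L[ℝ] ℝ)
        = (n : ℝ)⁻¹ • ∑ j, (InnerProductSpace.toDual ℝ (EuclideanSpace ℝ (Fin d)) (g j y) :
          EuclideanSpace ℝ (Fin d) →L[ℝ] ℝ) := by
      simp
    rw [h3]
    exact h1
  have hDeq : gF x - gF xt = D := by
    rw [hgFeq x, hgFeq xt, hDdef, ← smul_sub, ← Finset.sum_sub_distrib]
  -- smoothness bounds
  have hLs : 0 ≤ L * ‖x - xt‖ :=
    le_trans (norm_nonneg _) (hsmooth ⟨0, hn⟩ x xt)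
  have hvle : ∀ k, ‖v k‖ ≤ L * ‖x - xt‖ := fun k => hsmooth k x xt
  have hvsq : ∀ k, ‖v k‖ ^ 2 ≤ L ^ 2 * s := by
    intro k
    have := hvle k
    have h0 := norm_nonneg (v k)
    rw [hsdef]; nlinarith
  have hDle : ‖D‖ ≤ L * ‖x - xt‖ := by
    rw [hDdef, norm_smul]
    have h1 : ‖∑ j, v j‖ ≤ ∑ _j : Fin n, (L * ‖x - xt‖) :=
      norm_sum_le_of_le _ fun j _ => hvle j
    rw [Finset.sum_const, Finset.card_univ, Fintype.card_fin, nsmul_eq_mul] at h1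
    have h2 : ‖(n : ℝ)⁻¹‖ = (n : ℝ)⁻¹ := by
      rw [Real.norm_eq_abs, abs_of_nonneg (by positivity)]
    rw [h2]
    calc (n : ℝ)⁻¹ * ‖∑ j, v j‖ ≤ (n : ℝ)⁻¹ * ((n : ℝ) * (L * ‖x - xt‖)) := by
          apply mul_le_mul_of_nonneg_left h1 (by positivity)
      _ = L * ‖x - xt‖ := by field_simp
  have hubound : ∀ i ω, ‖u i ω‖ ≤ L * ‖x - xt‖ := by
    intro i ω
    rw [hu i ω, norm_smul]
    have h1 : ‖∑ a, (g (I i a ω) x - g (I i a ω) xt)‖ ≤ ∑ _a : Fin B, (L * ‖x - xt‖) :=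
      norm_sum_le_of_le _ fun a _ => hsmooth _ x xt
    rw [Finset.sum_const, Finset.card_univ, Fintype.card_fin, nsmul_eq_mul] at h1
    have h2 : ‖(B : ℝ)⁻¹‖ = (B : ℝ)⁻¹ := by
      rw [Real.norm_eq_abs, abs_of_nonneg (by positivity)]
    rw [h2]
    calc (B : ℝ)⁻¹ * ‖∑ a, (g (I i a ω) x - g (I i a ω) xt)‖
        ≤ (B : ℝ)⁻¹ * ((B : ℝ) * (L * ‖x - xt‖)) := by
          apply mul_le_mul_of_nonneg_left h1 (by positivity)
      _ = L * ‖x - xt‖ := by field_simp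
  have husup_sq : ∀ ω, (⨆ j, ‖u j ω‖ ^ 2) ≤ L ^ 2 * s := by
    intro ω
    refine Real.iSup_le (fun j => ?_) (by positivity)
    have := hubound j ω; have h0 := norm_nonneg (u j ω)
    rw [hsdef]; nlinarith
  -- coordinate bound
  have hcoord : ∀ (w : EuclideanSpace ℝ (Fin d)) (c : Fin d), |w c| ≤ ‖w‖ := by
    intro w c
    rw [EuclideanSpace.norm_eq, ← Real.sqrt_sq_eq_abs]
    apply Real.sqrt_le_sqrt
    have : w c ^ 2 = ‖w c‖ ^ 2 := by rw [Real.norm_eq_abs, sq_abs]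
    rw [this]
    exact Finset.single_le_sum (f := fun i => ‖w i‖ ^ 2) (fun c' _ => by positivity)
      (Finset.mem_univ c)
  have hδb : ∀ ω, (d : ℝ) * δ ω ^ 2 / 4 ≤ (d : ℝ) * lam ^ 2 / (4 * K ^ 2) * (L ^ 2 * s) := by
    intro ω
    have key : ∀ S : ℝ, 0 ≤ S → S ≤ L * ‖x - xt‖ →
        (d : ℝ) * (lam * S / K) ^ 2 / 4 ≤ (d : ℝ) * lam ^ 2 / (4 * K ^ 2) * (L ^ 2 * s) := by
      intro S hS0 hS1
      have hS2 : S ^ 2 ≤ L ^ 2 * s := by rw [hsdef]; nlinarith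
      have e : (d : ℝ) * (lam * S / K) ^ 2 / 4 = (d : ℝ) * lam ^ 2 / (4 * K ^ 2) * S ^ 2 := by
        field_simp
      rw [e]
      exact mul_le_mul_of_nonneg_left hS2 (by positivity)
    rw [hδ ω]
    exact key _ (Real.iSup_nonneg fun j => Real.iSup_nonneg fun c => abs_nonneg _)
      (Real.iSup_le (fun j => Real.iSup_le (fun c => (hcoord _ c).trans (hubound j ω)) hLs) hLs)
  -- measurability / integrability infrastructure
  have humeas : ∀ i, Measurable (u i) := by
    intro i
    have h1 : u i = fun ω => (B : ℝ)⁻¹ • ∑ a, (g (I i a ω) x - g (I i a ω) xt) :=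
      funext (hu i)
    rw [h1]
    exact (measurable_const_smul ((B : ℝ)⁻¹)).comp (Finset.measurable_sum _ fun a _ =>
      (measurable_of_countable (fun k => g k x - g k xt)).comp (hImeas i a))
  set Ybar : Ω → EuclideanSpace ℝ (Fin d) := fun ω => (N : ℝ)⁻¹ • ∑ i, Y i ω with hYbardef
  set ubar : Ω → EuclideanSpace ℝ (Fin d) := fun ω => (N : ℝ)⁻¹ • ∑ i, u i ω with hubardef
  have hubarmeas : Measurable ubar :=
    (measurable_const_smul ((N : ℝ)⁻¹)).comp (Finset.measurable_sum _ fun i _ => humeas i)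
  have hYbarmeas : Measurable Ybar :=
    (measurable_const_smul ((N : ℝ)⁻¹)).comp (Finset.measurable_sum _ fun i _ => hYmeas i)
  have hubarbound : ∀ ω, ‖ubar ω‖ ≤ L * ‖x - xt‖ := by
    intro ω
    rw [hubardef]
    simp only
    rw [norm_smul]
    have h1 : ‖∑ i, u i ω‖ ≤ ∑ _i : Fin N, (L * ‖x - xt‖) :=
      norm_sum_le_of_le _ fun i _ => hubound i ω
    rw [Finset.sum_const, Finset.card_univ, Fintype.card_fin, nsmul_eq_mul] at h1
    have h2 : ‖(N : ℝ)⁻¹‖ = (N : ℝ)⁻¹ := by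
      rw [Real.norm_eq_abs, abs_of_nonneg (by positivity)]
    rw [h2]
    calc (N : ℝ)⁻¹ * ‖∑ i, u i ω‖ ≤ (N : ℝ)⁻¹ * ((N : ℝ) * (L * ‖x - xt‖)) := by
          apply mul_le_mul_of_nonneg_left h1 (by positivity)
      _ = L * ‖x - xt‖ := by field_simp
  -- L² memberships
  have hYu_L2 : ∀ i, MemLp (fun ω => Y i ω - u i ω) 2 ℙ := fun i =>
    (memLp_two_iff_integrable_sq_norm
      ((hYmeas i).sub (humeas i)).aestronglyMeasurable).mpr (hYint i)
  have hu_L2 : ∀ i, MemLp (u i) 2 ℙ := fun i =>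
    MemLp.of_bound (humeas i).aestronglyMeasurable (L * ‖x - xt‖)
      (Filter.Eventually.of_forall (hubound i))
  have hY_L2 : ∀ i, MemLp (Y i) 2 ℙ := by
    intro i
    have h1 := (hYu_L2 i).add (hu_L2 i)
    have h2 : ((fun ω => Y i ω - u i ω) + u i) = Y i := by
      funext ω; simp
    rwa [h2] at h1
  have hYbar_L2 : MemLp Ybar 2 ℙ := by
    have h1 : MemLp (fun ω => ∑ i, Y i ω) 2 ℙ :=
      memLp_finsetSum _ fun i _ => hY_L2 i
    exact h1.const_smul ((N : ℝ)⁻¹)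
  have hYbar_int : Integrable Ybar ℙ := hYbar_L2.integrable one_le_two
  have hY₀Ybar_L2 : MemLp (fun ω => Y₀ ω - Ybar ω) 2 ℙ :=
    (memLp_two_iff_integrable_sq_norm
      (hY₀meas.sub hYbarmeas).aestronglyMeasurable).mpr hY₀sqint
  have hY₀_L2 : MemLp Y₀ 2 ℙ := by
    have h1 := hY₀Ybar_L2.add hYbar_L2
    have h2 : ((fun ω => Y₀ ω - Ybar ω) + Ybar) = Y₀ := by
      funext ω; simp
    rwa [h2] at h1
  have hubar_L2 : MemLp ubar 2 ℙ :=
    MemLp.of_bound hubarmeas.aestronglyMeasurable (L * ‖x - xt‖)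
      (Filter.Eventually.of_forall hubarbound)
  -- STEP B : server re-quantization variance
  have hBstep : ∫ ω, ‖Y₀ ω - Ybar ω‖ ^ 2 ≤ (d : ℝ) * lam ^ 2 / (4 * K ^ 2) * (L ^ 2 * s) := by
    have heq : ∫ ω, ‖Y₀ ω - Ybar ω‖ ^ 2
        = ∫ ω, (ℙ[fun ω' => ‖Y₀ ω' - Ybar ω'‖ ^ 2 | lpcm I Y]) ω := (integral_condExp hm).symm
    rw [heq]
    have hb2 : ∀ᵐ ω ∂ℙ, (ℙ[fun ω' => ‖Y₀ ω' - Ybar ω'‖ ^ 2 | lpcm I Y]) ω ≤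
        (d : ℝ) * lam ^ 2 / (4 * K ^ 2) * (L ^ 2 * s) := by
      filter_upwards [hY₀var] with ω h
      exact h.trans (hδb ω)
    have := integral_mono_ae integrable_condExp (integrable_const _) hb2
    simpa using this
  -- STEP D : worker quantization variance
  have hDw : ∀ i, ∫ ω, ‖Y i ω - u i ω‖ ^ 2 ≤ Cw * (L ^ 2 * s) := by
    intro i
    have heq : ∫ ω, ‖Y i ω - u i ω‖ ^ 2
        = ∫ ω, (ℙ[fun ω' => ‖Y i ω' - u i ω'‖ ^ 2 | lpcm1 I]) ω := (integral_condExp hm1).symm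
    rw [heq]
    have hb2 : ∀ᵐ ω ∂ℙ, (ℙ[fun ω' => ‖Y i ω' - u i ω'‖ ^ 2 | lpcm1 I]) ω ≤ Cw * (L ^ 2 * s) := by
      filter_upwards [hYcond i] with ω h
      exact h.trans (mul_le_mul_of_nonneg_left (husup_sq ω) hCw0)
    have := integral_mono_ae integrable_condExp (integrable_const _) hb2
    simpa using this
  have hYbarubar_int' : Integrable (fun ω => ‖Ybar ω - ubar ω‖ ^ 2) ℙ :=
    (memLp_two_iff_integrable_sq_norm
      (hYbarmeas.sub hubarmeas).aestronglyMeasurable).mp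
      (hYbar_L2.sub hubar_L2)
  have hDstep : ∫ ω, ‖Ybar ω - ubar ω‖ ^ 2 ≤ Cw * (L ^ 2 * s) := by
    have hpt : ∀ ω, ‖Ybar ω - ubar ω‖ ^ 2 ≤ (N : ℝ)⁻¹ * ∑ i, ‖Y i ω - u i ω‖ ^ 2 := by
      intro ω
      have h0 : Ybar ω - ubar ω = (N : ℝ)⁻¹ • ∑ i, (Y i ω - u i ω) := by
        simp only [hYbardef, hubardef, Finset.sum_sub_distrib, smul_sub]
      rw [h0, norm_smul]
      have h3 : ‖(N : ℝ)⁻¹‖ = (N : ℝ)⁻¹ := by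
        rw [Real.norm_eq_abs, abs_of_nonneg (by positivity)]
      rw [h3, mul_pow]
      have h1 : ‖∑ i, (Y i ω - u i ω)‖ ≤ ∑ i, ‖Y i ω - u i ω‖ := norm_sum_le _ _
      have h2 : (∑ i, ‖Y i ω - u i ω‖) ^ 2 ≤ (N : ℝ) * ∑ i, ‖Y i ω - u i ω‖ ^ 2 := by
        have := sq_sum_le_card_mul_sum_sq (s := (Finset.univ : Finset (Fin N)))
          (f := fun i => ‖Y i ω - u i ω‖)
        simpa using this
      have h4 : ‖∑ i, (Y i ω - u i ω)‖ ^ 2 ≤ (N : ℝ) * ∑ i, ‖Y i ω - u i ω‖ ^ 2 := by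
        nlinarith [norm_nonneg (∑ i, (Y i ω - u i ω)),
          Finset.sum_nonneg (fun i (_ : i ∈ Finset.univ) => norm_nonneg (Y i ω - u i ω))]
      calc ((N : ℝ)⁻¹) ^ 2 * ‖∑ i, (Y i ω - u i ω)‖ ^ 2
          ≤ ((N : ℝ)⁻¹) ^ 2 * ((N : ℝ) * ∑ i, ‖Y i ω - u i ω‖ ^ 2) :=
            mul_le_mul_of_nonneg_left h4 (by positivity)
        _ = (N : ℝ)⁻¹ * ∑ i, ‖Y i ω - u i ω‖ ^ 2 := by
            field_simp
    have hRint : Integrable (fun ω => (N : ℝ)⁻¹ * ∑ i, ‖Y i ω - u i ω‖ ^ 2) ℙ :=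
      (integrable_finset_sum _ fun i _ => hYint i).const_mul _
    have hint : ∫ ω, ‖Ybar ω - ubar ω‖ ^ 2
        ≤ ∫ ω, (N : ℝ)⁻¹ * ∑ i, ‖Y i ω - u i ω‖ ^ 2 :=
      integral_mono hYbarubar_int' hRint hpt
    have hval : ∫ ω, (N : ℝ)⁻¹ * ∑ i, ‖Y i ω - u i ω‖ ^ 2
        = (N : ℝ)⁻¹ * ∑ i, ∫ ω, ‖Y i ω - u i ω‖ ^ 2 := by
      rw [integral_const_mul, integral_finset_sum _ fun i _ => hYint i]
    have hsum : ∑ i : Fin N, ∫ ω, ‖Y i ω - u i ω‖ ^ 2 ≤ (N : ℝ) * (Cw * (L ^ 2 * s)) := by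
      calc ∑ i : Fin N, ∫ ω, ‖Y i ω - u i ω‖ ^ 2
          ≤ ∑ _i : Fin N, Cw * (L ^ 2 * s) := Finset.sum_le_sum fun i _ => hDw i
        _ = (N : ℝ) * (Cw * (L ^ 2 * s)) := by
            rw [Finset.sum_const, Finset.card_univ, Fintype.card_fin, nsmul_eq_mul]
    calc ∫ ω, ‖Ybar ω - ubar ω‖ ^ 2
        ≤ (N : ℝ)⁻¹ * ∑ i, ∫ ω, ‖Y i ω - u i ω‖ ^ 2 := by rw [← hval]; exact hint
      _ ≤ (N : ℝ)⁻¹ * ((N : ℝ) * (Cw * (L ^ 2 * s))) :=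
          mul_le_mul_of_nonneg_left hsum (by positivity)
      _ = Cw * (L ^ 2 * s) := by field_simp
  -- STEP E : mini-batch variance
  have hEstep : ∫ ω, ‖ubar ω - D‖ ^ 2 ≤ (L ^ 2 * s) / ((N : ℝ) * (B : ℝ)) := by
    set T : Fin d → Fin n → ℝ := fun c k => (v k - D) c with hTdef
    have hNB0 : ((N : ℝ) * (B : ℝ)) ≠ 0 := by positivity
    -- pointwise rewriting of ubar - D as a normalized sum
    have e1 : ∀ ω, ubar ω - D
        = ((N : ℝ) * (B : ℝ))⁻¹ • ∑ p : Fin N × Fin B, (v (I p.1 p.2 ω) - D) := by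
      intro ω
      have hA : ∑ p : Fin N × Fin B, (v (I p.1 p.2 ω) - D)
          = (∑ p : Fin N × Fin B, v (I p.1 p.2 ω)) - (N * B : ℕ) • D := by
        rw [Finset.sum_sub_distrib]
        congr 1
        rw [Finset.sum_const, Finset.card_univ]
        congr 1
        simp
      have hB2 : ((N : ℝ) * (B : ℝ))⁻¹ • ((N * B : ℕ) • D) = D := by
        rw [← Nat.cast_smul_eq_nsmul ℝ, smul_smul]
        push_cast
        rw [inv_mul_cancel₀ hNB0, one_smul]
      have hC : ubar ω = ((N : ℝ) * (B : ℝ))⁻¹ • ∑ p : Fin N × Fin B, v (I p.1 p.2 ω) := by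
        show (N : ℝ)⁻¹ • ∑ i, u i ω = _
        rw [Fintype.sum_prod_type]
        rw [Finset.sum_congr rfl fun i (_ : i ∈ Finset.univ) => hu i ω]
        rw [show (∑ i : Fin N, (B : ℝ)⁻¹ • ∑ a, (g (I i a ω) x - g (I i a ω) xt))
            = (B : ℝ)⁻¹ • ∑ i : Fin N, ∑ a, (g (I i a ω) x - g (I i a ω) xt) from
          (Finset.smul_sum).symm]
        rw [smul_smul, mul_inv]
      rw [hA, smul_sub, hB2, ← hC]
    -- coordinate bound
    have hCb0 : 0 ≤ L * ‖x - xt‖ + ‖D‖ := by positivity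
    have hTb : ∀ c k, |T c k| ≤ L * ‖x - xt‖ + ‖D‖ := by
      intro c k
      refine (hcoord _ c).trans ((norm_sub_le _ _).trans ?_)
      exact add_le_add_left (hvle k) _
    have hTmeas : ∀ c (p : Fin N × Fin B), Measurable (fun ω => T c (I p.1 p.2 ω)) :=
      fun c p => (measurable_of_countable (T c)).comp (hImeas p.1 p.2)
    have hint1 : ∀ c (p q : Fin N × Fin B),
        Integrable (fun ω => T c (I p.1 p.2 ω) * T c (I q.1 q.2 ω)) ℙ := by
      intro c p q
      refine lpc_integrable_of_bound (((hTmeas c p).mul (hTmeas c q)).aestronglyMeasurable)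
        ((L * ‖x - xt‖ + ‖D‖) * (L * ‖x - xt‖ + ‖D‖)) fun ω => ?_
      rw [abs_mul]
      exact mul_le_mul (hTb c _) (hTb c _) (abs_nonneg _) hCb0
    -- mean zero
    have hDc : ∀ c, D c = (n : ℝ)⁻¹ * ∑ k, v k c := by
      intro c
      show ((n : ℝ)⁻¹ • ∑ j, v j) c = _
      rw [PiLp.smul_apply, smul_eq_mul]
      congr 1
      rw [WithLp.ofLp_sum, Finset.sum_apply]
    have hmean : ∀ c (p : Fin N × Fin B), ∫ ω, T c (I p.1 p.2 ω) = 0 := by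
      intro c p
      have h1 : ∫ ω, T c (I p.1 p.2 ω) = (n : ℝ)⁻¹ * ∑ k, T c k :=
        lpc_integral_comp_fin (I p.1 p.2) (hImeas p.1 p.2) (T c) (hIunif p.1 p.2)
      rw [h1]
      have h2 : ∑ k, T c k = 0 := by
        have h3 : ∀ k, T c k = v k c - D c := by
          intro k
          show (v k - D) c = _
          rfl
        rw [Finset.sum_congr rfl fun k _ => h3 k, Finset.sum_sub_distrib,
          Finset.sum_const, Finset.card_univ, Fintype.card_fin, nsmul_eq_mul, hDc c]
        have h4 : ∑ k, v k c = (∑ k, v k) c := by rw [WithLp.ofLp_sum, Finset.sum_apply]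
        field_simp
        simp
      rw [h2, mul_zero]
    -- off-diagonal terms vanish
    have hcrossE : ∀ (c : Fin d) (p q : Fin N × Fin B), p ≠ q →
        ∫ ω, T c (I p.1 p.2 ω) * T c (I q.1 q.2 ω) = 0 := by
      intro c p q hpq
      have hind : IndepFun (I p.1 p.2) (I q.1 q.2) ℙ := hIindep.indepFun hpq
      have h2 := (hind.comp (measurable_of_countable (T c))
          (measurable_of_countable (T c))).integral_fun_mul_eq_mul_integral
        ((hTmeas c p).aestronglyMeasurable) ((hTmeas c q).aestronglyMeasurable)
      rw [show (∫ ω, T c (I p.1 p.2 ω) * T c (I q.1 q.2 ω))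
          = (∫ ω, (T c ∘ I p.1 p.2) ω * (T c ∘ I q.1 q.2) ω) from rfl, h2]
      have hm1' := hmean c p
      have hm2' := hmean c q
      rw [show (integral ℙ (T c ∘ I p.1 p.2)) = ∫ ω, T c (I p.1 p.2 ω) from rfl,
        show (integral ℙ (T c ∘ I q.1 q.2)) = ∫ ω, T c (I q.1 q.2 ω) from rfl,
        hm1', hm2', mul_zero]
    -- diagonal second moments
    have hdiag : ∀ (c : Fin d) (p : Fin N × Fin B),
        ∫ ω, T c (I p.1 p.2 ω) * T c (I p.1 p.2 ω) = (n : ℝ)⁻¹ * ∑ k, T c k * T c k :=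
      fun c p => lpc_integral_comp_fin (I p.1 p.2) (hImeas p.1 p.2)
        (fun k => T c k * T c k) (hIunif p.1 p.2)
    -- variance bound
    have hvar : (n : ℝ)⁻¹ * ∑ k, ‖v k - D‖ ^ 2 ≤ L ^ 2 * s := by
      have hsv : ∑ k, v k = (n : ℝ) • D := by
        rw [hDdef, smul_smul, mul_inv_cancel₀ hn0, one_smul]
      have hid : ∑ k, ‖v k - D‖ ^ 2 = (∑ k, ‖v k‖ ^ 2) - (n : ℝ) * ‖D‖ ^ 2 := by
        rw [Finset.sum_congr rfl fun k (_ : k ∈ Finset.univ) => norm_sub_sq_real (v k) D]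
        rw [Finset.sum_add_distrib, Finset.sum_sub_distrib]
        have h5 : ∑ k : Fin n, 2 * (inner ℝ (v k) D : ℝ) = 2 * ((n : ℝ) * ‖D‖ ^ 2) := by
          rw [← Finset.mul_sum, ← sum_inner, hsv, real_inner_smul_left,
            real_inner_self_eq_norm_sq]
        rw [h5, Finset.sum_const, Finset.card_univ, Fintype.card_fin, nsmul_eq_mul]
        ring
      have hA : ∑ k : Fin n, ‖v k‖ ^ 2 ≤ (n : ℝ) * (L ^ 2 * s) := by
        calc ∑ k : Fin n, ‖v k‖ ^ 2 ≤ ∑ _k : Fin n, L ^ 2 * s :=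
              Finset.sum_le_sum fun k _ => hvsq k
          _ = (n : ℝ) * (L ^ 2 * s) := by
              rw [Finset.sum_const, Finset.card_univ, Fintype.card_fin, nsmul_eq_mul]
      calc (n : ℝ)⁻¹ * ∑ k, ‖v k - D‖ ^ 2
          = (n : ℝ)⁻¹ * ((∑ k, ‖v k‖ ^ 2) - (n : ℝ) * ‖D‖ ^ 2) := by rw [hid]
        _ ≤ (n : ℝ)⁻¹ * ∑ k, ‖v k‖ ^ 2 := by
            apply mul_le_mul_of_nonneg_left _ (by positivity)
            nlinarith [sq_nonneg ‖D‖, (Nat.cast_pos (α := ℝ)).mpr hn]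
        _ ≤ (n : ℝ)⁻¹ * ((n : ℝ) * (L ^ 2 * s)) :=
            mul_le_mul_of_nonneg_left hA (by positivity)
        _ = L ^ 2 * s := by field_simp
    -- main second-moment bound for the big sum
    have hSint : ∫ ω, ‖∑ p : Fin N × Fin B, (v (I p.1 p.2 ω) - D)‖ ^ 2
        ≤ ((N : ℝ) * (B : ℝ)) * (L ^ 2 * s) := by
      have hexp : ∀ ω, ‖∑ p : Fin N × Fin B, (v (I p.1 p.2 ω) - D)‖ ^ 2
          = ∑ c, ∑ p : Fin N × Fin B, ∑ q : Fin N × Fin B,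
              T c (I p.1 p.2 ω) * T c (I q.1 q.2 ω) := by
        intro ω
        rw [lpc_norm_sq_eq_sum]
        refine Finset.sum_congr rfl fun c _ => ?_
        have hcs : (∑ p : Fin N × Fin B, (v (I p.1 p.2 ω) - D)) c
            = ∑ p : Fin N × Fin B, T c (I p.1 p.2 ω) :=
          by rw [WithLp.ofLp_sum, Finset.sum_apply]
        rw [hcs, sq, Finset.sum_mul_sum]
      calc ∫ ω, ‖∑ p : Fin N × Fin B, (v (I p.1 p.2 ω) - D)‖ ^ 2
          = ∫ ω, ∑ c, ∑ p : Fin N × Fin B, ∑ q : Fin N × Fin B,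
              T c (I p.1 p.2 ω) * T c (I q.1 q.2 ω) :=
            integral_congr_ae (Filter.Eventually.of_forall hexp)
        _ = ∑ c, ∑ p : Fin N × Fin B, ∑ q : Fin N × Fin B,
              ∫ ω, T c (I p.1 p.2 ω) * T c (I q.1 q.2 ω) := by
            rw [integral_finset_sum _ fun c _ => integrable_finset_sum _ fun p _ =>
              integrable_finset_sum _ fun q _ => hint1 c p q]
            refine Finset.sum_congr rfl fun c _ => ?_
            rw [integral_finset_sum _ fun p _ => integrable_finset_sum _ fun q _ =>
              hint1 c p q]
            refine Finset.sum_congr rfl fun p _ => ?_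
            rw [integral_finset_sum _ fun q _ => hint1 c p q]
        _ = ∑ c, ∑ p : Fin N × Fin B, ((n : ℝ)⁻¹ * ∑ k, T c k * T c k) := by
            refine Finset.sum_congr rfl fun c _ => Finset.sum_congr rfl fun p _ => ?_
            rw [Finset.sum_eq_single p]
            · exact hdiag c p
            · intro q _ hq
              exact hcrossE c p q (Ne.symm hq)
            · intro h
              exact absurd (Finset.mem_univ _) h
        _ = ∑ p : Fin N × Fin B, ((n : ℝ)⁻¹ * ∑ k, ‖v k - D‖ ^ 2) := by
            rw [Finset.sum_comm]
            refine Finset.sum_congr rfl fun p _ => ?_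
            rw [← Finset.mul_sum, Finset.sum_comm]
            congr 1
            refine Finset.sum_congr rfl fun k _ => ?_
            rw [show (∑ c, T c k * T c k) = ∑ c, ((v k - D) c) ^ 2 from
              Finset.sum_congr rfl fun c _ => by rw [← sq]]
            exact (lpc_norm_sq_eq_sum (v k - D)).symm
        _ ≤ ∑ _p : Fin N × Fin B, (L ^ 2 * s) := Finset.sum_le_sum fun p _ => hvar
        _ = ((N : ℝ) * (B : ℝ)) * (L ^ 2 * s) := by
            rw [Finset.sum_const, Finset.card_univ, nsmul_eq_mul]
            congr 1
            simp
    -- conclude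
    have hIeq : ∫ ω, ‖ubar ω - D‖ ^ 2
        = (((N : ℝ) * (B : ℝ))⁻¹) ^ 2 *
            ∫ ω, ‖∑ p : Fin N × Fin B, (v (I p.1 p.2 ω) - D)‖ ^ 2 := by
      rw [← integral_const_mul]
      refine integral_congr_ae (Filter.Eventually.of_forall fun ω => ?_)
      show ‖ubar ω - D‖ ^ 2 = (((N : ℝ) * (B : ℝ))⁻¹) ^ 2 *
        ‖∑ p : Fin N × Fin B, (v (I p.1 p.2 ω) - D)‖ ^ 2
      rw [e1 ω, norm_smul, mul_pow]
      congr 2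
      rw [Real.norm_eq_abs, abs_of_nonneg (by positivity)]
    rw [hIeq]
    calc (((N : ℝ) * (B : ℝ))⁻¹) ^ 2 *
          ∫ ω, ‖∑ p : Fin N × Fin B, (v (I p.1 p.2 ω) - D)‖ ^ 2
        ≤ (((N : ℝ) * (B : ℝ))⁻¹) ^ 2 * (((N : ℝ) * (B : ℝ)) * (L ^ 2 * s)) :=
          mul_le_mul_of_nonneg_left hSint (by positivity)
      _ = (L ^ 2 * s) / ((N : ℝ) * (B : ℝ)) := by
          field_simp
  -- integrability of pieces
  have hYbarD_int : Integrable (fun ω => ‖Ybar ω - D‖ ^ 2) ℙ :=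
    (memLp_two_iff_integrable_sq_norm
      (hYbarmeas.sub measurable_const).aestronglyMeasurable).mp
      (hYbar_L2.sub (memLp_const D))
  have hYbarubar_int : Integrable (fun ω => ‖Ybar ω - ubar ω‖ ^ 2) ℙ :=
    (memLp_two_iff_integrable_sq_norm
      (hYbarmeas.sub hubarmeas).aestronglyMeasurable).mp
      (hYbar_L2.sub hubar_L2)
  have hubarD_int : Integrable (fun ω => ‖ubar ω - D‖ ^ 2) ℙ :=
    (memLp_two_iff_integrable_sq_norm
      (hubarmeas.sub measurable_const).aestronglyMeasurable).mp
      (hubar_L2.sub (memLp_const D))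
  -- cross term vanishes
  have hY₀mean' : (ℙ[Y₀ | lpcm I Y]) =ᵐ[ℙ] Ybar := hY₀mean
  have hYm_m : ∀ i, Measurable[lpcm I Y] (Y i) := by
    intro i
    refine measurable_iff_comap_le.mpr ?_
    exact le_trans (le_iSup (fun i => MeasurableSpace.comap (Y i) inferInstance) i) le_sup_right
  have hYbar_m : Measurable[lpcm I Y] Ybar :=
    (measurable_const_smul ((N : ℝ)⁻¹)).comp (Finset.measurable_sum _ fun i _ => hYm_m i)
  have hprojmeas : ∀ c : Fin d, Measurable fun z : EuclideanSpace ℝ (Fin d) => z c :=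
    fun c => (EuclideanSpace.proj c).continuous.measurable
  have hY₀c_int : ∀ c, Integrable (fun ω => Y₀ ω c) ℙ := by
    intro c
    have h := (EuclideanSpace.proj (𝕜 := ℝ) (ι := Fin d) c).integrable_comp hY₀int
    exact h
  have hYbarc_int : ∀ c, Integrable (fun ω => Ybar ω c) ℙ := by
    intro c
    have h := (EuclideanSpace.proj (𝕜 := ℝ) (ι := Fin d) c).integrable_comp hYbar_int
    exact h
  have hY₀c_L2 : ∀ c, MemLp (fun ω => Y₀ ω c) 2 ℙ := by
    intro c
    have h := (EuclideanSpace.proj (𝕜 := ℝ) (ι := Fin d) c).comp_memLp' hY₀_L2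
    exact h
  have hYbarc_L2 : ∀ c, MemLp (fun ω => Ybar ω c) 2 ℙ := by
    intro c
    have h := (EuclideanSpace.proj (𝕜 := ℝ) (ι := Fin d) c).comp_memLp' hYbar_L2
    exact h
  have hYbarc_m : ∀ c, Measurable[lpcm I Y] fun ω => Ybar ω c := fun c =>
    (hprojmeas c).comp hYbar_m
  have hsetint : ∀ sset : Set Ω, MeasurableSet[lpcm I Y] sset →
      ∫ ω in sset, Y₀ ω = ∫ ω in sset, Ybar ω := by
    intro sset hs
    rw [← setIntegral_condExp hm hY₀int hs]
    exact integral_congr_ae (ae_restrict_of_ae hY₀mean')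
  have hY₀c_cond : ∀ c, (fun ω => Ybar ω c) =ᵐ[ℙ] ℙ[fun ω => Y₀ ω c | lpcm I Y] := by
    intro c
    refine ae_eq_condExp_of_forall_setIntegral_eq hm (hY₀c_int c)
      (fun sset hs hμ => (hYbarc_int c).integrableOn)
      (fun sset hs hμ => ?_) ?_
    · calc ∫ ω in sset, Ybar ω c = (EuclideanSpace.proj c) (∫ ω in sset, Ybar ω) :=
            (EuclideanSpace.proj c).integral_comp_comm hYbar_int.integrableOn
        _ = (EuclideanSpace.proj c) (∫ ω in sset, Y₀ ω) := by rw [hsetint sset hs]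
        _ = ∫ ω in sset, Y₀ ω c :=
            ((EuclideanSpace.proj c).integral_comp_comm hY₀int.integrableOn).symm
    · exact ((hYbarc_m c).stronglyMeasurable).aestronglyMeasurable
  have hWc : ∀ c, ℙ[fun ω => Y₀ ω c - Ybar ω c | lpcm I Y] =ᵐ[ℙ] fun _ => (0 : ℝ) := by
    intro c
    have h1 : ℙ[(fun ω => Y₀ ω c) - (fun ω => Ybar ω c) | lpcm I Y]
        =ᵐ[ℙ] ℙ[fun ω => Y₀ ω c | lpcm I Y] - ℙ[fun ω => Ybar ω c | lpcm I Y] :=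
      condExp_sub (hY₀c_int c) (hYbarc_int c) _
    have h2 : ℙ[fun ω => Ybar ω c | lpcm I Y] = fun ω => Ybar ω c :=
      condExp_of_stronglyMeasurable hm ((hYbarc_m c).stronglyMeasurable) (hYbarc_int c)
    refine h1.trans ?_
    filter_upwards [hY₀c_cond c] with ω e1
    simp only [Pi.sub_apply]
    rw [← e1, h2]
    ring
  have hcross : ∫ ω, (inner ℝ (Y₀ ω - Ybar ω) (Ybar ω - D) : ℝ) = 0 := by
    have hWmeas : ∀ c, AEStronglyMeasurable (fun ω => Y₀ ω c - Ybar ω c) ℙ := fun c =>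
      (((hprojmeas c).comp hY₀meas).sub ((hprojmeas c).comp hYbarmeas)).aestronglyMeasurable
    have hZmeas : ∀ c, AEStronglyMeasurable (fun ω => Ybar ω c - D c) ℙ := fun c =>
      (((hprojmeas c).comp hYbarmeas).sub measurable_const).aestronglyMeasurable
    have hW2 : ∀ c, Integrable (fun ω => (Y₀ ω c - Ybar ω c) ^ 2) ℙ := fun c =>
      ((hY₀c_L2 c).sub (hYbarc_L2 c)).integrable_sq
    have hZ2 : ∀ c, Integrable (fun ω => (Ybar ω c - D c) ^ 2) ℙ := fun c =>
      ((hYbarc_L2 c).sub (memLp_const (D c))).integrable_sq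
    have hprod : ∀ c, Integrable (fun ω => (Ybar ω c - D c) * (Y₀ ω c - Ybar ω c)) ℙ :=
      fun c => lpc_integrable_mul_of_sq (hZmeas c) (hWmeas c) (hZ2 c) (hW2 c)
    have hptin : ∀ ω, (inner ℝ (Y₀ ω - Ybar ω) (Ybar ω - D) : ℝ)
        = ∑ c, (Ybar ω c - D c) * (Y₀ ω c - Ybar ω c) := by
      intro ω
      rw [PiLp.inner_apply]
      refine Finset.sum_congr rfl fun c _ => ?_
      have ha : (Y₀ ω - Ybar ω) c = Y₀ ω c - Ybar ω c := rfl
      have hb : (Ybar ω - D) c = Ybar ω c - D c := rfl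
      rw [RCLike.inner_apply, conj_trivial, ha, hb]
    have hco : ∀ c, ∫ ω, (Ybar ω c - D c) * (Y₀ ω c - Ybar ω c) = 0 := by
      intro c
      have hZsm : StronglyMeasurable[lpcm I Y] fun ω => Ybar ω c - D c :=
        ((hYbarc_m c).sub measurable_const).stronglyMeasurable
      have hWint : Integrable (fun ω => Y₀ ω c - Ybar ω c) ℙ :=
        (hY₀c_int c).sub (hYbarc_int c)
      have hmul : ℙ[fun ω' => (Ybar ω' c - D c) * (Y₀ ω' c - Ybar ω' c) | lpcm I Y]
          =ᵐ[ℙ] fun ω => (Ybar ω c - D c) *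
            (ℙ[fun ω' => Y₀ ω' c - Ybar ω' c | lpcm I Y]) ω :=
        condExp_mul_of_stronglyMeasurable_left hZsm (hprod c) hWint
      have heq0 : (fun ω => (Ybar ω c - D c) *
          (ℙ[fun ω' => Y₀ ω' c - Ybar ω' c | lpcm I Y]) ω) =ᵐ[ℙ] fun _ => (0 : ℝ) := by
        filter_upwards [hWc c] with ω hw
        simp [hw]
      calc ∫ ω, (Ybar ω c - D c) * (Y₀ ω c - Ybar ω c)
          = ∫ ω, (ℙ[fun ω' => (Ybar ω' c - D c) * (Y₀ ω' c - Ybar ω' c) | lpcm I Y]) ω :=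
            (integral_condExp hm).symm
        _ = ∫ _ω, (0 : ℝ) := integral_congr_ae (hmul.trans heq0)
        _ = 0 := by simp
    rw [integral_congr_ae (Filter.Eventually.of_forall hptin),
      integral_finset_sum _ fun c _ => hprod c]
    exact Finset.sum_eq_zero fun c _ => hco c
  have hcross_int : Integrable (fun ω => (inner ℝ (Y₀ ω - Ybar ω) (Ybar ω - D) : ℝ)) ℙ := by
    refine Integrable.mono' ((hY₀sqint.add hYbarD_int).div_const 2)
      ((hY₀meas.sub hYbarmeas).aestronglyMeasurable.inner
        (hYbarmeas.sub measurable_const).aestronglyMeasurable) ?_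
    filter_upwards with ω
    rw [Real.norm_eq_abs, Pi.add_apply]
    have h1 := abs_real_inner_le_norm (Y₀ ω - Ybar ω) (Ybar ω - D)
    nlinarith [sq_nonneg (‖Y₀ ω - Ybar ω‖ - ‖Ybar ω - D‖), abs_nonneg
      (inner ℝ (Y₀ ω - Ybar ω) (Ybar ω - D) : ℝ)]
  -- splitting identity
  have hsplit : ∫ ω, ‖Y₀ ω - D‖ ^ 2
      = (∫ ω, ‖Y₀ ω - Ybar ω‖ ^ 2) + ∫ ω, ‖Ybar ω - D‖ ^ 2 := by
    have hpt : ∀ ω, ‖Y₀ ω - D‖ ^ 2 = ‖Y₀ ω - Ybar ω‖ ^ 2 +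
        (2 * (inner ℝ (Y₀ ω - Ybar ω) (Ybar ω - D) : ℝ) + ‖Ybar ω - D‖ ^ 2) := by
      intro ω
      have h1 := norm_add_sq_real (Y₀ ω - Ybar ω) (Ybar ω - D)
      rw [sub_add_sub_cancel] at h1
      rw [h1]; ring
    have e0 : ∫ ω, ‖Y₀ ω - D‖ ^ 2
        = ∫ ω, (‖Y₀ ω - Ybar ω‖ ^ 2 +
            (2 * (inner ℝ (Y₀ ω - Ybar ω) (Ybar ω - D) : ℝ) + ‖Ybar ω - D‖ ^ 2)) :=
      integral_congr_ae (Filter.Eventually.of_forall hpt)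
    have e1 : ∫ ω, (‖Y₀ ω - Ybar ω‖ ^ 2 +
            (2 * (inner ℝ (Y₀ ω - Ybar ω) (Ybar ω - D) : ℝ) + ‖Ybar ω - D‖ ^ 2))
        = (∫ ω, ‖Y₀ ω - Ybar ω‖ ^ 2) +
            ∫ ω, (2 * (inner ℝ (Y₀ ω - Ybar ω) (Ybar ω - D) : ℝ) + ‖Ybar ω - D‖ ^ 2) :=
      integral_add hY₀sqint ((hcross_int.const_mul 2).add hYbarD_int)
    have e2 : ∫ ω, (2 * (inner ℝ (Y₀ ω - Ybar ω) (Ybar ω - D) : ℝ) + ‖Ybar ω - D‖ ^ 2)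
        = (∫ ω, 2 * (inner ℝ (Y₀ ω - Ybar ω) (Ybar ω - D) : ℝ))
            + ∫ ω, ‖Ybar ω - D‖ ^ 2 :=
      integral_add (hcross_int.const_mul 2) hYbarD_int
    have e3 : ∫ ω, 2 * (inner ℝ (Y₀ ω - Ybar ω) (Ybar ω - D) : ℝ)
        = 2 * ∫ ω, (inner ℝ (Y₀ ω - Ybar ω) (Ybar ω - D) : ℝ) :=
      integral_const_mul 2 _
    rw [e0, e1, e2, e3, hcross]
    ring
  -- second splitting : ‖Ybar - D‖² ≤ 2‖Ybar - ubar‖² + 2‖ubar - D‖²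
  have hsplit2 : ∫ ω, ‖Ybar ω - D‖ ^ 2
      ≤ 2 * (∫ ω, ‖Ybar ω - ubar ω‖ ^ 2) + 2 * ∫ ω, ‖ubar ω - D‖ ^ 2 := by
    have hpt : ∀ ω, ‖Ybar ω - D‖ ^ 2 ≤ 2 * ‖Ybar ω - ubar ω‖ ^ 2 + 2 * ‖ubar ω - D‖ ^ 2 := by
      intro ω
      have h1 : ‖Ybar ω - D‖ ≤ ‖Ybar ω - ubar ω‖ + ‖ubar ω - D‖ := by
        have := norm_add_le (Ybar ω - ubar ω) (ubar ω - D)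
        rw [sub_add_sub_cancel] at this
        exact this
      have h0 := norm_nonneg (Ybar ω - D)
      have h2 : ‖Ybar ω - D‖ ^ 2 ≤ (‖Ybar ω - ubar ω‖ + ‖ubar ω - D‖) ^ 2 := by nlinarith
      nlinarith [sq_nonneg (‖Ybar ω - ubar ω‖ - ‖ubar ω - D‖)]
    calc ∫ ω, ‖Ybar ω - D‖ ^ 2
        ≤ ∫ ω, (2 * ‖Ybar ω - ubar ω‖ ^ 2 + 2 * ‖ubar ω - D‖ ^ 2) :=
          integral_mono hYbarD_int
            ((hYbarubar_int.const_mul 2).add (hubarD_int.const_mul 2)) hpt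
      _ = 2 * (∫ ω, ‖Ybar ω - ubar ω‖ ^ 2) + 2 * ∫ ω, ‖ubar ω - D‖ ^ 2 := by
          rw [integral_add (hYbarubar_int.const_mul 2) (hubarD_int.const_mul 2),
            integral_const_mul, integral_const_mul]
  -- conclusion
  have hgoal_eq : ∫ ω, ‖Y₀ ω + gF xt - gF x‖ ^ 2 = ∫ ω, ‖Y₀ ω - D‖ ^ 2 := by
    refine integral_congr_ae (Filter.Eventually.of_forall fun ω => ?_)
    have h1 : Y₀ ω + gF xt - gF x = Y₀ ω - D := by rw [← hDeq]; abel
    show ‖Y₀ ω + gF xt - gF x‖ ^ 2 = ‖Y₀ ω - D‖ ^ 2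
    rw [h1]
  rw [hgoal_eq, hsplit]
  have hfinal : (d : ℝ) * lam ^ 2 / (4 * K ^ 2) * (L ^ 2 * s)
      + (2 * (Cw * (L ^ 2 * s)) + 2 * ((L ^ 2 * s) / ((N : ℝ) * (B : ℝ))))
      = 2 * L ^ 2 * (3 * (d : ℝ) * lam ^ 2 / (8 * K ^ 2) +
          (dlam : ℝ) * (1 - lam) ^ 2 + 1 / ((N : ℝ) * (B : ℝ))) * s := by
    rw [hCwdef]
    field_simp
    ring
  have hYD : ∫ ω, ‖Ybar ω - D‖ ^ 2
      ≤ 2 * (Cw * (L ^ 2 * s)) + 2 * ((L ^ 2 * s) / ((N : ℝ) * (B : ℝ))) := by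
    have h1 := mul_le_mul_of_nonneg_left hDstep (show (0:ℝ) ≤ 2 by norm_num)
    have h2 := mul_le_mul_of_nonneg_left hEstep (show (0:ℝ) ≤ 2 by norm_num)
    exact hsplit2.trans (add_le_add h1 h2)
  calc (∫ ω, ‖Y₀ ω - Ybar ω‖ ^ 2) + ∫ ω, ‖Ybar ω - D‖ ^ 2
      ≤ (d : ℝ) * lam ^ 2 / (4 * K ^ 2) * (L ^ 2 * s) +
        (2 * (Cw * (L ^ 2 * s)) + 2 * ((L ^ 2 * s) / ((N : ℝ) * (B : ℝ)))) := by
        linarith [hBstep, hYD]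
    _ = _ := by rw [hfinal]
end

section
/- Let f₁, …, f_n : ℝ^d → ℝ be differentiable, convex, and each L-smooth, and let f(x) = (1/n)∑_{j=1}^n f_j(x). Then for all x, x̃ ∈ ℝ^d: (1/n)∑_{j=1}^n ‖∇f_j(x) − ∇f_j(x̃)‖² ≤ 2L·[f(x̃) − f(x) − ⟨∇f(x), x̃ − x⟩]. -/
open scoped BigOperators RealInnerProductSpace

/-!
Summing over `j`, it suffices to bound a single convex `L`-smooth `f`. Tilting `f` by the linear
form `⟪∇f x, ·⟫` makes `x` a global minimiser of `h = f - ⟪∇f x, ·⟫`, while the descent lemma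
`f y ≤ f x + ⟪∇f x, y - x⟫ + L/2 ‖y - x‖²` shows that the gradient step `y - L⁻¹ ∇h y` lowers `h`
by at least `‖∇h y‖² / 2L`. Hence `‖∇f y - ∇f x‖² / 2L ≤ h y - h x`, the Bregman divergence.
-/

open Set AffineMap

variable {E : Type*} [NormedAddCommGroup E] [InnerProductSpace ℝ E] [CompleteSpace E]
  {f : E → ℝ} {g : E → E} {L : ℝ}

theorem HasGradientAt.hasDerivAt_comp_lineMap {f' x y : E} {t : ℝ}
    (h : HasGradientAt f f' (lineMap x y t)) :
    HasDerivAt (fun s : ℝ => f (lineMap x y s)) ⟪f', y - x⟫ t := by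
  have := h.hasFDerivAt.comp_hasDerivAt t hasDerivAt_lineMap
  simpa [Function.comp_def] using this

theorem ConvexOn.add_inner_le_of_hasGradientAt {f' x : E} (hf : ConvexOn ℝ univ f)
    (h : HasGradientAt f f' x) (y : E) : f x + ⟪f', y - x⟫ ≤ f y := by
  have hd : HasDerivAt (fun s : ℝ => f (lineMap x y s)) ⟪f', y - x⟫ 0 :=
    HasGradientAt.hasDerivAt_comp_lineMap (by simpa using h)
  have := (hf.comp_affineMap (lineMap x y)).le_slope_of_hasDerivAt (mem_univ 0) (mem_univ 1)
    one_pos hd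
  simp only [slope_def_field, Function.comp_apply, lineMap_apply_one, lineMap_apply_zero,
    sub_zero, div_one] at this
  linarith

theorem le_add_inner_add_sq_of_lipschitz_gradient (hgrad : ∀ z, HasGradientAt f (g z) z)
    (hsmooth : ∀ a b, ‖g a - g b‖ ≤ L * ‖a - b‖) (x y : E) :
    f y ≤ f x + ⟪g x, y - x⟫ + L / 2 * ‖y - x‖ ^ 2 := by
  set v := y - x
  set ψ : ℝ → ℝ := fun t => f (lineMap x y t) - t * ⟪g x, v⟫ - L / 2 * t ^ 2 * ‖v‖ ^ 2
  have hψ : ∀ t, HasDerivAt ψ (⟪g (lineMap x y t) - g x, v⟫ - L * t * ‖v‖ ^ 2) t := by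
    intro t
    refine ((((hgrad _).hasDerivAt_comp_lineMap).sub
      ((hasDerivAt_id t).mul_const ⟪g x, v⟫)).sub
      (((hasDerivAt_pow 2 t).const_mul (L / 2)).mul_const (‖v‖ ^ 2))).congr_deriv ?_
    rw [inner_sub_left]
    ring
  have hψ' : ∀ t, 0 ≤ t → ⟪g (lineMap x y t) - g x, v⟫ - L * t * ‖v‖ ^ 2 ≤ 0 := by
    intro t ht
    have hdist : ‖lineMap x y t - x‖ = t * ‖v‖ := by
      rw [← vsub_eq_sub, lineMap_vsub_left, norm_smul, Real.norm_of_nonneg ht, vsub_eq_sub]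
    have := (real_inner_le_norm _ _).trans
      (mul_le_mul_of_nonneg_right (hsmooth (lineMap x y t) x) (norm_nonneg v))
    rw [hdist] at this
    linarith
  have hanti : AntitoneOn ψ (Icc 0 1) :=
    antitoneOn_of_deriv_nonpos (convex_Icc 0 1)
      (fun t _ => (hψ t).continuousAt.continuousWithinAt)
      (fun t _ => (hψ t).differentiableAt.differentiableWithinAt)
      (fun t ht => (hψ t).deriv ▸ hψ' t (interior_subset ht).1)
  have := hanti (left_mem_Icc.2 zero_le_one) (right_mem_Icc.2 zero_le_one) zero_le_one
  simp only [ψ, lineMap_apply_zero, lineMap_apply_one] at this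
  linarith

theorem HasGradientAt.sub_inner {f' x : E} (h : HasGradientAt f f' x) (a : E) :
    HasGradientAt (fun z => f z - ⟪a, z⟫) (f' - a) x := by
  rw [hasGradientAt_iff_hasFDerivAt, map_sub]
  exact h.hasFDerivAt.sub (InnerProductSpace.toDual ℝ E a).hasFDerivAt

theorem HasGradientAt.const_mul_sum {ι : Type*} (s : Finset ι) {f : ι → E → ℝ} {f' : ι → E}
    {x : E} (c : ℝ) (h : ∀ j ∈ s, HasGradientAt (f j) (f' j) x) :
    HasGradientAt (fun y => c * ∑ j ∈ s, f j y) (c • ∑ j ∈ s, f' j) x := by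
  rw [hasGradientAt_iff_hasFDerivAt, map_smul, map_sum]
  exact (HasFDerivAt.fun_sum fun j hj => (h j hj).hasFDerivAt).const_mul c

theorem apply_sub_inv_smul_le_of_lipschitz_gradient (hL : 0 < L)
    (hgrad : ∀ z, HasGradientAt f (g z) z) (hsmooth : ∀ a b, ‖g a - g b‖ ≤ L * ‖a - b‖)
    (y : E) : f (y - L⁻¹ • g y) ≤ f y - ‖g y‖ ^ 2 / (2 * L) := by
  have := le_add_inner_add_sq_of_lipschitz_gradient hgrad hsmooth y (y - L⁻¹ • g y)
  rw [sub_sub_cancel_left, inner_neg_right, real_inner_smul_right, real_inner_self_eq_norm_sq,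
    norm_neg, norm_smul, Real.norm_of_nonneg (inv_nonneg.2 hL.le)] at this
  convert this using 1
  field_simp
  ring

theorem ConvexOn.sq_norm_sub_le_of_lipschitz_gradient (hf : ConvexOn ℝ univ f)
    (hgrad : ∀ z, HasGradientAt f (g z) z) (hsmooth : ∀ a b, ‖g a - g b‖ ≤ L * ‖a - b‖)
    (x y : E) : ‖g x - g y‖ ^ 2 ≤ 2 * L * (f y - f x - ⟪g x, y - x⟫) := by
  rcases lt_or_ge 0 L with hL | hL
  · set h : E → ℝ := fun z => f z - ⟪g x, z⟫
    have hgradh : ∀ z, HasGradientAt h (g z - g x) z := fun z => (hgrad z).sub_inner (g x)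
    have hconvh : ConvexOn ℝ univ h := hf.sub ((innerₗ E (g x)).concaveOn convex_univ)
    have hmin : ∀ z, h x ≤ h z := fun z => by
      simpa [h] using hconvh.add_inner_le_of_hasGradientAt (hgradh x) z
    have hstep := apply_sub_inv_smul_le_of_lipschitz_gradient hL hgradh
      (fun a b => by rw [sub_sub_sub_cancel_right]; exact hsmooth a b) y
    have hbound : ‖g x - g y‖ ^ 2 / (2 * L) ≤ f y - f x - ⟪g x, y - x⟫ := by
      have := hmin (y - L⁻¹ • (g y - g x))
      simp only [h, inner_sub_right] at this hstep ⊢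
      rw [norm_sub_rev]
      linarith
    rwa [div_le_iff₀' (by positivity)] at hbound
  · have hLxy : L * ‖x - y‖ = 0 :=
      le_antisymm (mul_nonpos_of_nonpos_of_nonneg hL (norm_nonneg _))
        ((norm_nonneg _).trans (hsmooth x y))
    rcases mul_eq_zero.1 hLxy with rfl | hxy
    · simpa using hsmooth x y
    · rw [norm_eq_zero, sub_eq_zero] at hxy
      simp [hxy]

theorem convex_smooth_bregman_bound_general
    {d n : ℕ} (L : ℝ)
    (f : Fin n → EuclideanSpace ℝ (Fin d) → ℝ)
    (g : Fin n → EuclideanSpace ℝ (Fin d) → EuclideanSpace ℝ (Fin d))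
    (hgrad : ∀ j x, HasGradientAt (f j) (g j x) x)
    (hconv : ∀ j, ConvexOn ℝ Set.univ (f j))
    (hsmooth : ∀ j x y, ‖g j x - g j y‖ ≤ L * ‖x - y‖)
    (gF : EuclideanSpace ℝ (Fin d) → EuclideanSpace ℝ (Fin d))
    (hgF : ∀ x, HasGradientAt (fun y => (n : ℝ)⁻¹ * ∑ j, f j y) (gF x) x)
    (x xt : EuclideanSpace ℝ (Fin d)) :
    (n : ℝ)⁻¹ * ∑ j, ‖g j x - g j xt‖ ^ 2 ≤
      2 * L * ((n : ℝ)⁻¹ * ∑ j, f j xt - (n : ℝ)⁻¹ * ∑ j, f j x - ⟪gF x, xt - x⟫) := by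
  have hgFx : gF x = (n : ℝ)⁻¹ • ∑ j, g j x :=
    (hgF x).unique (HasGradientAt.const_mul_sum _ _ fun j _ => hgrad j x)
  calc (n : ℝ)⁻¹ * ∑ j, ‖g j x - g j xt‖ ^ 2
      ≤ (n : ℝ)⁻¹ * ∑ j, 2 * L * (f j xt - f j x - ⟪g j x, xt - x⟫) := by
        gcongr with j
        exact (hconv j).sq_norm_sub_le_of_lipschitz_gradient (hgrad j) (hsmooth j) x xt
    _ = _ := by
        rw [hgFx, real_inner_smul_left, sum_inner, ← Finset.mul_sum, Finset.sum_sub_distrib,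
          Finset.sum_sub_distrib]
        ring

/-- **Bregman-divergence bound for convex smooth components.** If each `f j` is differentiable,
convex and `L`-smooth, and `f = (1/n)∑ f j` has gradient `gF`, then
`(1/n)∑_j ‖∇f_j(x) - ∇f_j(x̃)‖² ≤ 2L[f(x̃) - f(x) - ⟨∇f(x), x̃ - x⟩]`. -/
theorem convex_smooth_bregman_bound
    {d n : ℕ} (hn : 0 < n) (L : ℝ)
    (f : Fin n → EuclideanSpace ℝ (Fin d) → ℝ)
    (g : Fin n → EuclideanSpace ℝ (Fin d) → EuclideanSpace ℝ (Fin d))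
    (hgrad : ∀ j x, HasGradientAt (f j) (g j x) x)
    (hconv : ∀ j, ConvexOn ℝ Set.univ (f j))
    (hsmooth : ∀ j x y, ‖g j x - g j y‖ ≤ L * ‖x - y‖)
    (gF : EuclideanSpace ℝ (Fin d) → EuclideanSpace ℝ (Fin d))
    (hgF : ∀ x, HasGradientAt (fun y => (n : ℝ)⁻¹ * ∑ j, f j y) (gF x) x)
    (x xt : EuclideanSpace ℝ (Fin d)) :
    (n : ℝ)⁻¹ * ∑ j, ‖g j x - g j xt‖ ^ 2 ≤
      2 * L * ((n : ℝ)⁻¹ * ∑ j, f j xt - (n : ℝ)⁻¹ * ∑ j, f j x - ⟪gF x, xt - x⟫) :=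
  convex_smooth_bregman_bound_general L f g hgrad hconv hsmooth gF hgF x xt
end

section
/- Let f : ℝ^d → ℝ be differentiable and L-smooth, h : ℝ^d → ℝ convex, and P = f + h. Fix x, v ∈ ℝ^d and let y⁺ be a minimizer of y ↦ 2L‖y − x‖² + ⟨v, y⟩ + h(y). Then P(x) − P(y⁺) ≥ −(2L‖y⁺ − x‖² + ⟨v, y⁺ − x⟩ + h(y⁺) − h(x)) − (1/(6L))‖∇f(x) − v‖². -/
/-!
By the descent lemma, `f y⁺` is at most its linearization at `x` plus `(L/2)‖y⁺ - x‖²`.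
Replacing `∇f(x)` by `v` in the linearization costs `⟨∇f(x) - v, y⁺ - x⟩`, which Young's
inequality bounds by `(3L/2)‖y⁺ - x‖² + ‖∇f(x) - v‖² / (6L)`.
-/

open scoped RealInnerProductSpace

theorem real_inner_le_mul_norm_sq_add_norm_sq_div {F : Type*} [NormedAddCommGroup F]
    [InnerProductSpace ℝ F] {c : ℝ} (hc : 0 < c) (a b : F) :
    ⟪a, b⟫ ≤ c / 2 * ‖b‖ ^ 2 + ‖a‖ ^ 2 / (2 * c) := by
  have key : 2 * c * (‖a‖ * ‖b‖) ≤ c ^ 2 * ‖b‖ ^ 2 + ‖a‖ ^ 2 := by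
    nlinarith [sq_nonneg (c * ‖b‖ - ‖a‖)]
  calc ⟪a, b⟫ ≤ ‖a‖ * ‖b‖ := real_inner_le_norm a b
    _ ≤ c / 2 * ‖b‖ ^ 2 + ‖a‖ ^ 2 / (2 * c) := by
      rw [← mul_le_mul_iff_right₀ (by positivity : 0 < 2 * c)]
      field_simp
      linarith

theorem le_add_fderiv_add_half_mul_norm_sq {E : Type*} [NormedAddCommGroup E] [NormedSpace ℝ E]
    {f : E → ℝ} {f' : E → StrongDual ℝ E} {L : ℝ} (hf : ∀ x, HasFDerivAt f (f' x) x)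
    (hf' : ∀ x y, ‖f' x - f' y‖ ≤ L * ‖x - y‖) (x y : E) :
    f y ≤ f x + f' x (y - x) + L / 2 * ‖y - x‖ ^ 2 := by
  set u := y - x
  -- the gap between `f` and its quadratic model along `t ↦ x + t • u` is antitone for `t ≥ 0`
  let φ : ℝ → ℝ := fun t => f (x + t • u) - t * f' x u - L / 2 * t ^ 2 * ‖u‖ ^ 2
  have hφ : ∀ t, HasDerivAt φ (f' (x + t • u) u - f' x u - L * t * ‖u‖ ^ 2) t := by
    intro t
    have hline : HasDerivAt (fun s : ℝ => x + s • u) u t := by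
      simpa using ((hasDerivAt_id t).smul_const u).const_add x
    have := (((hf _).comp_hasDerivAt t hline).sub ((hasDerivAt_id t).mul_const (f' x u))).sub
      (((hasDerivAt_pow 2 t).const_mul (L / 2)).mul_const (‖u‖ ^ 2))
    exact this.congr_deriv (by push_cast; ring)
  have hφ_nonpos : ∀ t, 0 ≤ t → f' (x + t • u) u - f' x u - L * t * ‖u‖ ^ 2 ≤ 0 := by
    intro t ht
    have hgap : ‖f' (x + t • u) - f' x‖ ≤ L * (t * ‖u‖) := by
      simpa [norm_smul, abs_of_nonneg ht] using hf' (x + t • u) x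
    have hbound := ((f' (x + t • u) - f' x).le_opNorm u).trans
      (mul_le_mul_of_nonneg_right hgap (norm_nonneg u))
    rw [sub_apply, Real.norm_eq_abs] at hbound
    nlinarith [le_abs_self (f' (x + t • u) u - f' x u)]
  have hanti : AntitoneOn φ (Set.Ici 0) :=
    antitoneOn_of_hasDerivWithinAt_nonpos (convex_Ici 0)
      (fun t _ => (hφ t).continuousAt.continuousWithinAt)
      (fun t _ => (hφ t).hasDerivWithinAt)
      (fun t ht => hφ_nonpos t (le_of_lt (by simpa using ht)))
  have hφ_le := hanti Set.self_mem_Ici (Set.mem_Ici.2 zero_le_one) zero_le_one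
  simp only [φ, u, one_smul, zero_smul, add_zero, one_mul, zero_mul, one_pow, sub_zero,
    add_sub_cancel] at hφ_le
  linarith

theorem le_add_inner_gradient_add_half_mul_norm_sq {F : Type*} [NormedAddCommGroup F]
    [InnerProductSpace ℝ F] [CompleteSpace F] {f : F → ℝ} {gf : F → F} {L : ℝ}
    (hf : ∀ x, HasGradientAt f (gf x) x) (hgf : ∀ x y, ‖gf x - gf y‖ ≤ L * ‖x - y‖) (x y : F) :
    f y ≤ f x + ⟪gf x, y - x⟫ + L / 2 * ‖y - x‖ ^ 2 :=
  le_add_fderiv_add_half_mul_norm_sq (f' := fun x => InnerProductSpace.toDual ℝ F (gf x)) hf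
    (fun x y => by rw [← map_sub, LinearIsometryEquiv.norm_map]; exact hgf x y) x y

theorem inexact_gradient_step_progress_general
    {d : ℕ} (L : ℝ) (hL : 0 < L)
    (f : EuclideanSpace ℝ (Fin d) → ℝ)
    (gf : EuclideanSpace ℝ (Fin d) → EuclideanSpace ℝ (Fin d))
    (hgrad : ∀ x, HasGradientAt f (gf x) x)
    (hsmooth : ∀ x y, ‖gf x - gf y‖ ≤ L * ‖x - y‖)
    (h : EuclideanSpace ℝ (Fin d) → ℝ)
    (x v yplus : EuclideanSpace ℝ (Fin d)) :
    (f x + h x) - (f yplus + h yplus) ≥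
      -(2 * L * ‖yplus - x‖ ^ 2 + ⟪v, yplus - x⟫ + h yplus - h x) -
        (1 / (6 * L)) * ‖gf x - v‖ ^ 2 := by
  have hdescent := le_add_inner_gradient_add_half_mul_norm_sq hgrad hsmooth x yplus
  have hyoung := real_inner_le_mul_norm_sq_add_norm_sq_div (by positivity : 0 < 3 * L)
    (gf x - v) (yplus - x)
  rw [inner_sub_left] at hyoung
  have hconst : ‖gf x - v‖ ^ 2 / (2 * (3 * L)) = 1 / (6 * L) * ‖gf x - v‖ ^ 2 := by ring
  linarith

/-- **Progress of the inexact gradient step (Lemma 6 of the supplementary).** For `f`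
differentiable and `L`-smooth, `h` convex, `P = f + h`, and `y⁺` a minimizer of
`y ↦ 2L‖y - x‖² + ⟨v, y⟩ + h(y)`, we have
`P(x) - P(y⁺) ≥ -(2L‖y⁺ - x‖² + ⟨v, y⁺ - x⟩ + h(y⁺) - h(x)) - (1/(6L))‖∇f(x) - v‖²`. -/
theorem inexact_gradient_step_progress
    {d : ℕ} (L : ℝ) (hL : 0 < L)
    (f : EuclideanSpace ℝ (Fin d) → ℝ)
    (gf : EuclideanSpace ℝ (Fin d) → EuclideanSpace ℝ (Fin d))
    (hgrad : ∀ x, HasGradientAt f (gf x) x)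
    (hsmooth : ∀ x y, ‖gf x - gf y‖ ≤ L * ‖x - y‖)
    (h : EuclideanSpace ℝ (Fin d) → ℝ) (hconv : ConvexOn ℝ Set.univ h)
    (x v yplus : EuclideanSpace ℝ (Fin d))
    (hmin : IsMinOn (fun y => 2 * L * ‖y - x‖ ^ 2 + ⟪v, y⟫ + h y) Set.univ yplus) :
    (f x + h x) - (f yplus + h yplus) ≥
      -(2 * L * ‖yplus - x‖ ^ 2 + ⟪v, yplus - x⟫ + h yplus - h x) -
        (1 / (6 * L)) * ‖gf x - v‖ ^ 2 :=
  inexact_gradient_step_progress_general L hL f gf hgrad hsmooth h x v yplus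
end

section
/- Let f₁, …, f_n : ℝ^d → ℝ be differentiable, convex, and each L-smooth, f(x) = (1/n)∑_{j=1}^n f_j(x); let h : ℝ^d → ℝ be σ-strongly convex with σ ≥ 0 and P = f + h. Let ζ = d·λ²/(4(2^{b−1}−1)²) + d_λ(1−λ)² + 1/(NB) for λ ∈ (0,1], integer b ≥ 2, integer 0 ≤ d_λ ≤ d, and integers N, B ≥ 1. Let τ₁ ∈ (0,1], τ₂ = (5/3)ζ + 1/(2B) with τ₁ + τ₂ ≤ 1 and τ₂ ≤ 1/2, and α = 1/(6τ₁L). Fix z, x̃, y ∈ ℝ^d and set x⁺ = τ₁z + τ₂x̃ + (1 − τ₁ − τ₂)y, and D = f(x̃) − f(x⁺) − ⟨∇f(x⁺), x̃ − x⁺⟩. Let v, v̂ be random vectors with E[v̂] = ∇f(x⁺), E‖v − ∇f(x⁺)‖² ≤ 4L·(ζ − 1/(NB) + 1/(NB))·D (i.e. ≤ 4LζD), and E‖v̂ − v‖² ≤ 4L·(ζ + 1/(2B))·D. Let y⁺ be the minimizer of y' ↦ 2L‖y' − x⁺‖² + ⟨v, y'⟩ + h(y'), and z⁺ the minimizer of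 z' ↦ (1/(2α))‖z' − z‖² + ⟨v̂, z'⟩ + h(z'). Then for every u ∈ ℝ^d: α⟨∇f(x⁺), z − u⟩ − α·h(u) ≤ E[(α/τ₁)(P(x⁺) − P(y⁺) + τ₂P(x̃) − τ₂f(x⁺) − τ₂⟨∇f(x⁺), x̃ − x⁺⟩) + (α/τ₁)(1 − τ₁ − τ₂)h(y) − (α/τ₁)h(x⁺) + (1/2)‖z − u‖² − ((1 + ασ)/2)‖z⁺ − u‖²]. -/
open MeasureTheory ProbabilityTheory
open scoped ProbabilityTheory BigOperators RealInnerProductSpace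

section Aux
variable {E : Type*} [NormedAddCommGroup E] [InnerProductSpace ℝ E]

lemma alpc_convex3 {h : E → ℝ} (hc : ConvexOn ℝ Set.univ h) {a b c : ℝ}
    (ha : 0 ≤ a) (hb : 0 ≤ b) (hc' : 0 ≤ c) (habc : a + b + c = 1) (x y z : E) :
    h (a • x + b • y + c • z) ≤ a * h x + b * h y + c * h z := by
  have H := hc.map_sum_le (t := (Finset.univ : Finset (Fin 3))) (w := ![a, b, c])
    (p := ![x, y, z]) (fun i _ => by fin_cases i <;> simpa)
    (by simp [Fin.sum_univ_three]; linarith) (fun i _ => Set.mem_univ _)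
  simpa [Fin.sum_univ_three] using H

lemma alpc_mirror_growth {σ μ : ℝ} (hμ : 0 ≤ μ) (hσ : 0 ≤ σ) {h : E → ℝ}
    (hstrong : StrongConvexOn Set.univ σ h) (v z zp : E)
    (hmin : IsMinOn (fun z' => μ * ‖z' - z‖ ^ 2 + ⟪v, z'⟫ + h z') Set.univ zp)
    (u : E) :
    μ * ‖zp - z‖ ^ 2 + ⟪v, zp⟫ + h zp + (μ + σ / 2) * ‖u - zp‖ ^ 2 ≤
      μ * ‖u - z‖ ^ 2 + ⟪v, u⟫ + h u := by
  have hstep : ∀ lam : ℝ, 0 < lam → lam < 1 →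
      μ * ‖zp - z‖ ^ 2 + ⟪v, zp⟫ + h zp + (1 - lam) * ((μ + σ / 2) * ‖u - zp‖ ^ 2) ≤
        μ * ‖u - z‖ ^ 2 + ⟪v, u⟫ + h u := by
    intro lam h0 h1
    have ha : (0:ℝ) ≤ 1 - lam := by linarith
    have hb : (0:ℝ) ≤ lam := h0.le
    have hmin' := isMinOn_iff.mp hmin ((1 - lam) • zp + lam • u) (Set.mem_univ _)
    have hconvh := hstrong.2 (Set.mem_univ zp) (Set.mem_univ u) ha hb (by ring)
    simp only [smul_eq_mul] at hconvh
    have hpz : (1 - lam) • zp + lam • u - z = (1 - lam) • (zp - z) + lam • (u - z) := by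
      module
    have ezu : zp - u = (zp - z) - (u - z) := by abel
    have hsub : ‖zp - u‖ ^ 2 = ‖zp - z‖ ^ 2 - 2 * ⟪zp - z, u - z⟫ + ‖u - z‖ ^ 2 := by
      rw [ezu]; exact norm_sub_sq_real _ _
    have hq : ‖(1 - lam) • zp + lam • u - z‖ ^ 2 =
        (1 - lam) ^ 2 * ‖zp - z‖ ^ 2 + 2 * (1 - lam) * lam * ⟪zp - z, u - z⟫
          + lam ^ 2 * ‖u - z‖ ^ 2 := by
      rw [hpz, norm_add_sq_real, norm_smul, norm_smul, real_inner_smul_left,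
        real_inner_smul_right, Real.norm_eq_abs, Real.norm_eq_abs]
      rw [mul_pow, mul_pow, sq_abs, sq_abs]
      ring
    have hμq : μ * ‖(1 - lam) • zp + lam • u - z‖ ^ 2 =
        μ * ((1 - lam) ^ 2 * ‖zp - z‖ ^ 2 + 2 * (1 - lam) * lam * ⟪zp - z, u - z⟫
          + lam ^ 2 * ‖u - z‖ ^ 2) := by rw [hq]
    have hip : ⟪v, (1 - lam) • zp + lam • u⟫ = (1 - lam) * ⟪v, zp⟫ + lam * ⟪v, u⟫ := by
      rw [inner_add_right, real_inner_smul_right, real_inner_smul_right]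
    have hnuzp : ‖u - zp‖ = ‖zp - u‖ := norm_sub_rev _ _
    rw [hsub] at hconvh
    rw [hnuzp, hsub]
    have hsum : lam * (μ * ‖zp - z‖ ^ 2 + ⟪v, zp⟫ + h zp
          + (1 - lam) * ((μ + σ / 2) * (‖zp - z‖ ^ 2 - 2 * ⟪zp - z, u - z⟫ + ‖u - z‖ ^ 2))) ≤
        lam * (μ * ‖u - z‖ ^ 2 + ⟪v, u⟫ + h u) := by
      linarith [hmin', hconvh, hμq, hip]
    have := (mul_le_mul_iff_right₀ h0).mp hsum
    linarith
  have h2 := hstep (1 / 2) (by norm_num) (by norm_num)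
  by_contra hcon
  push_neg at hcon
  set A := μ * ‖zp - z‖ ^ 2 + ⟪v, zp⟫ + h zp with hA
  set B := μ * ‖u - z‖ ^ 2 + ⟪v, u⟫ + h u with hB
  set c := (μ + σ / 2) * ‖u - zp‖ ^ 2 with hc0
  have hcpos : 0 < c := by linarith
  have hlam0 : (0:ℝ) < (c - (B - A)) / (2 * c) := div_pos (by linarith) (by linarith)
  have hlam1 : (c - (B - A)) / (2 * c) < 1 := by
    rw [div_lt_one (by linarith)]; linarith
  have h3 := hstep _ hlam0 hlam1
  have hval : (1 - (c - (B - A)) / (2 * c)) * c = c - (c - (B - A)) / 2 := by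
    field_simp
  linarith

lemma alpc_descent {E : Type*} [NormedAddCommGroup E] [InnerProductSpace ℝ E] [CompleteSpace E]
    {F : E → ℝ} {gF : E → E} {L : ℝ} (hL : 0 < L)
    (hgF : ∀ x, HasGradientAt F (gF x) x)
    (hlip : ∀ x y, ‖gF x - gF y‖ ≤ L * ‖x - y‖) (a b : E) :
    F b ≤ F a + ⟪gF a, b - a⟫ + L / 2 * ‖b - a‖ ^ 2 := by
  set u := b - a with hu
  have hb : a + u = b := by rw [hu]; abel
  have hpath : ∀ t : ℝ, HasDerivAt (fun s : ℝ => F (a + s • u)) ⟪gF (a + t • u), u⟫ t := by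
    intro t
    have h1 : HasFDerivAt F (InnerProductSpace.toDual ℝ E (gF (a + t • u))) (a + t • u) :=
      (hgF _).hasFDerivAt
    have h2 : HasDerivAt (fun s : ℝ => a + s • u) u t := by
      simpa using ((hasDerivAt_id t).smul_const u).const_add a
    have h3 := h1.comp_hasDerivAt t h2
    simp at h3
    exact h3
  have hgc : Continuous gF := by
    have : LipschitzWith (Real.toNNReal L) gF := by
      apply LipschitzWith.of_dist_le_mul
      intro x y
      rw [dist_eq_norm, dist_eq_norm]
      calc ‖gF x - gF y‖ ≤ L * ‖x - y‖ := hlip x y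
        _ = (Real.toNNReal L : ℝ) * ‖x - y‖ := by rw [Real.coe_toNNReal _ hL.le]
    exact this.continuous
  have hcont : Continuous fun t : ℝ => ⟪gF (a + t • u), u⟫ :=
    Continuous.inner (hgc.comp (by continuity)) continuous_const
  have hFTC : ∫ t in (0:ℝ)..1, ⟪gF (a + t • u), u⟫ = F (a + (1:ℝ) • u) - F (a + (0:ℝ) • u) :=
    intervalIntegral.integral_eq_sub_of_hasDerivAt (fun t _ => hpath t)
      (hcont.intervalIntegrable 0 1)
  have h1 : F b - F a = ∫ t in (0:ℝ)..1, ⟪gF (a + t • u), u⟫ := by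
    rw [hFTC]; simp [hb]
  have h2 : ∫ t in (0:ℝ)..1, ⟪gF (a + t • u), u⟫ ≤
      ∫ t in (0:ℝ)..1, (⟪gF a, u⟫ + L * t * ‖u‖ ^ 2) := by
    apply intervalIntegral.integral_mono_on (by norm_num) (hcont.intervalIntegrable 0 1)
      ((Continuous.intervalIntegrable (by continuity) 0 1))
    intro t ht
    have hbd : ⟪gF (a + t • u) - gF a, u⟫ ≤ L * t * ‖u‖ ^ 2 := by
      calc ⟪gF (a + t • u) - gF a, u⟫ ≤ ‖gF (a + t • u) - gF a‖ * ‖u‖ :=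
            real_inner_le_norm _ _
        _ ≤ (L * ‖a + t • u - a‖) * ‖u‖ :=
            mul_le_mul_of_nonneg_right (hlip _ _) (norm_nonneg u)
        _ = L * t * ‖u‖ ^ 2 := by
            rw [add_sub_cancel_left, norm_smul, Real.norm_eq_abs, abs_of_nonneg ht.1]
            ring
    have e := inner_sub_left (𝕜 := ℝ) (gF (a + t • u)) (gF a) u
    linarith [hbd, e.symm.le, e.le]
  have h3 : ∫ t in (0:ℝ)..1, (⟪gF a, u⟫ + L * t * ‖u‖ ^ 2) =
      ⟪gF a, u⟫ + L / 2 * ‖u‖ ^ 2 := by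
    rw [intervalIntegral.integral_add (intervalIntegrable_const)
      (Continuous.intervalIntegrable (by continuity) 0 1)]
    simp only [intervalIntegral.integral_const, smul_eq_mul, sub_zero, one_mul]
    have : ∫ t in (0:ℝ)..1, L * t * ‖u‖ ^ 2 = L * ‖u‖ ^ 2 * ∫ t in (0:ℝ)..1, t := by
      rw [← intervalIntegral.integral_const_mul]
      congr 1; funext t; ring
    rw [this, integral_id]
    ring
  linarith

end Aux


set_option maxHeartbeats 1000000 in
/-- **Per-iteration coupling inequality of ALPC-SVRG (Lemma 11 of the supplementary).**
`x⁺` is the Katyusha convex combination of the mirror point `z`, the snapshot `x̃` and the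
gradient point `y`; `v` is the quantized distributed SVRG estimator and `v̂` the independent
full-precision double-sampling estimator of `∇f(x⁺)`; `y⁺` is the gradient step using `v`
and `z⁺` the mirror step using `v̂`.  Then for every `u`,
`α⟨∇f(x⁺), z - u⟩ - αh(u) ≤ E[(α/τ₁)(P(x⁺) - P(y⁺) + τ₂P(x̃) - τ₂f(x⁺) - τ₂⟨∇f(x⁺), x̃ - x⁺⟩)
  + (α/τ₁)(1 - τ₁ - τ₂)h(y) - (α/τ₁)h(x⁺) + ½‖z - u‖² - ((1 + ασ)/2)‖z⁺ - u‖²]`. -/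
theorem alpc_svrg_coupling_inequality
    {Ω : Type*} [MeasureSpace Ω] [IsProbabilityMeasure (ℙ : Measure Ω)]
    {d n N B : ℕ} (hn : 0 < n) (hN : 0 < N) (hB : 0 < B)
    (b dlam : ℕ) (hb : 2 ≤ b) (hdlam : dlam ≤ d)
    (lam : ℝ) (hlam : lam ∈ Set.Ioc (0 : ℝ) 1)
    (L : ℝ) (hL : 0 < L) (σ : ℝ) (hσ : 0 ≤ σ)
    (f : Fin n → EuclideanSpace ℝ (Fin d) → ℝ)
    (g : Fin n → EuclideanSpace ℝ (Fin d) → EuclideanSpace ℝ (Fin d))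
    (hgrad : ∀ j x, HasGradientAt (f j) (g j x) x)
    (hconv : ∀ j, ConvexOn ℝ Set.univ (f j))
    (hsmooth : ∀ j x y, ‖g j x - g j y‖ ≤ L * ‖x - y‖)
    (F : EuclideanSpace ℝ (Fin d) → ℝ) (hF : ∀ y, F y = (n : ℝ)⁻¹ * ∑ j, f j y)
    (gF : EuclideanSpace ℝ (Fin d) → EuclideanSpace ℝ (Fin d))
    (hgF : ∀ x, HasGradientAt F (gF x) x)
    (h : EuclideanSpace ℝ (Fin d) → ℝ) (hstrong : StrongConvexOn Set.univ σ h)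
    (P : EuclideanSpace ℝ (Fin d) → ℝ) (hP : ∀ y, P y = F y + h y)
    -- parameters
    (ζ τ₁ τ₂ α : ℝ)
    (hζ : ζ = (d : ℝ) * lam ^ 2 / (4 * ((2 : ℝ) ^ (b - 1) - 1) ^ 2) +
      (dlam : ℝ) * (1 - lam) ^ 2 + 1 / ((N : ℝ) * (B : ℝ)))
    (hτ₁ : τ₁ ∈ Set.Ioc (0 : ℝ) 1)
    (hτ₂ : τ₂ = 5 / 3 * ζ + 1 / (2 * (B : ℝ))) (hτ₂le : τ₂ ≤ 1 / 2)
    (hτsum : τ₁ + τ₂ ≤ 1)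
    (hα : α = 1 / (6 * τ₁ * L))
    -- the current points and the Katyusha convex combination
    (z xtil y xplus : EuclideanSpace ℝ (Fin d))
    (hxplus : xplus = τ₁ • z + τ₂ • xtil + (1 - τ₁ - τ₂) • y)
    -- the Bregman divergence of f between x̃ and x⁺
    (D : ℝ) (hD : D = F xtil - F xplus - ⟪gF xplus, xtil - xplus⟫)
    -- the two stochastic gradient estimators (quantized `v` and full-precision `v̂`)
    (v vh : Ω → EuclideanSpace ℝ (Fin d))
    (hvmeas : Measurable v) (hvhmeas : Measurable vh)
    (hvhint : Integrable vh)
    (hvint : Integrable fun ω => ‖v ω - gF xplus‖ ^ 2)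
    (hdiffint : Integrable fun ω => ‖vh ω - v ω‖ ^ 2)
    (hvhmean : ∫ ω, vh ω = gF xplus)
    (hvvar : ∫ ω, ‖v ω - gF xplus‖ ^ 2 ≤ 4 * L * ζ * D)
    (hdiffvar : ∫ ω, ‖vh ω - v ω‖ ^ 2 ≤ 4 * L * (ζ + 1 / (2 * (B : ℝ))) * D)
    -- the gradient step (with `v`) and the mirror step (with `v̂`)
    (yplus zplus : Ω → EuclideanSpace ℝ (Fin d))
    (hyplusmeas : Measurable yplus) (hzplusmeas : Measurable zplus)
    (hyplus : ∀ ω, IsMinOn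
      (fun y' => 2 * L * ‖y' - xplus‖ ^ 2 + ⟪v ω, y'⟫ + h y') Set.univ (yplus ω))
    (hzplus : ∀ ω, IsMinOn
      (fun z' => (1 / (2 * α)) * ‖z' - z‖ ^ 2 + ⟪vh ω, z'⟫ + h z') Set.univ (zplus ω))
    (hyplusint : Integrable fun ω => P (yplus ω))
    (hzplusint : Integrable fun ω => ‖zplus ω‖ ^ 2) :
    ∀ u : EuclideanSpace ℝ (Fin d),
      α * ⟪gF xplus, z - u⟫ - α * h u ≤
        ∫ ω, ((α / τ₁) * (P xplus - P (yplus ω) + τ₂ * P xtil - τ₂ * F xplus -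
              τ₂ * ⟪gF xplus, xtil - xplus⟫) +
            (α / τ₁) * (1 - τ₁ - τ₂) * h y - (α / τ₁) * h xplus +
            (1 / 2) * ‖z - u‖ ^ 2 - ((1 + α * σ) / 2) * ‖zplus ω - u‖ ^ 2) := by
  intro u
  -- basic positivity facts
  have hτ₁pos : 0 < τ₁ := hτ₁.1
  have h6 : (0:ℝ) < 6 * τ₁ * L := by
    have := mul_pos (mul_pos (by norm_num : (0:ℝ) < 6) hτ₁pos) hL
    linarith
  have hαpos : 0 < α := by rw [hα]; exact one_div_pos.mpr h6
  have hζ0 : 0 ≤ ζ := by rw [hζ]; positivity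
  have hτ₂0 : 0 ≤ τ₂ := by
    rw [hτ₂]
    have hb' : (0:ℝ) ≤ 1 / (2 * (B:ℝ)) := by positivity
    linarith
  have hrest0 : 0 ≤ 1 - τ₁ - τ₂ := by linarith [hτsum]
  have hB0 : ((B:ℝ)) ≠ 0 := Nat.cast_ne_zero.mpr hB.ne'
  -- h is convex
  have hconvh : ConvexOn ℝ Set.univ h := by
    refine ⟨convex_univ, fun x _ y' _ a b' ha hb' hab => ?_⟩
    have H := hstrong.2 (Set.mem_univ x) (Set.mem_univ y') ha hb' hab
    simp only [smul_eq_mul] at H ⊢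
    nlinarith [mul_nonneg (mul_nonneg ha hb')
      (mul_nonneg (by linarith : (0:ℝ) ≤ σ / 2) (sq_nonneg ‖x - y'‖))]
  -- scalar identities (proved on plain reals so that field_simp cannot unfold inners)
  have eMgen : ∀ a bb c e : ℝ, α * (1 / (2 * α) * a + bb + c + (1 / (2 * α) + σ / 2) * e) =
      1 / 2 * a + α * bb + α * c + (1 + α * σ) / 2 * e := by
    intro a bb c e
    field_simp
  have eM2gen : ∀ a bb c : ℝ, α * (1 / (2 * α) * a + bb + c) =
      1 / 2 * a + α * bb + α * c := by
    intro a bb c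
    field_simp
  have eB1gen : ∀ r s : ℝ, α / τ₁ * (τ₁ * r - τ₁ * s) = α * r - α * s := by
    intro r s; field_simp
  have eB2gen : ∀ fx fy hy' nv nz hz' hx' hyy : ℝ,
      α / τ₁ * (fx - fy + 1 / (6 * L) * nv + 2 * L * (τ₁ ^ 2 * nz) + τ₁ * hz' + τ₂ * hx' +
        (1 - τ₁ - τ₂) * hyy - hy') =
      α / τ₁ * fx - α / τ₁ * fy - α / τ₁ * hy' + α ^ 2 * nv + 1 / 3 * nz + α * hz' +
        α / τ₁ * (τ₂ * hx') + α / τ₁ * ((1 - τ₁ - τ₂) * hyy) := by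
    intro fx fy hy' nv nz hz' hx' hyy
    rw [hα]
    field_simp
    ring
  have hYgen : ∀ a bb : ℝ, a * bb ≤ 1 / (6 * L) * a ^ 2 + 3 * L / 2 * bb ^ 2 := by
    intro a bb
    have hid : 1 / (6 * L) * a ^ 2 + 3 * L / 2 * bb ^ 2 - a * bb =
        1 / (6 * L) * (a - 3 * L * bb) ^ 2 := by field_simp; ring
    have h0 : (0:ℝ) ≤ 1 / (6 * L) * (a - 3 * L * bb) ^ 2 :=
      mul_nonneg (le_of_lt (one_div_pos.mpr (by linarith))) (sq_nonneg _)
    linarith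
  -- the gradient of F and its Lipschitz property
  have hgFeq : ∀ x : EuclideanSpace ℝ (Fin d), gF x = (n : ℝ)⁻¹ • ∑ j, g j x := by
    intro x
    have h1 : HasFDerivAt (fun y' => ∑ j, f j y')
        (∑ j, InnerProductSpace.toDual ℝ (EuclideanSpace ℝ (Fin d)) (g j x)) x :=
      HasFDerivAt.fun_sum fun j _ => (hgrad j x).hasFDerivAt
    have h2 := h1.const_mul ((n : ℝ)⁻¹)
    have h3 : HasGradientAt F ((n : ℝ)⁻¹ • ∑ j, g j x) x := by
      have hFfun : F = fun y' => (n : ℝ)⁻¹ * ∑ j, f j y' := funext hF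
    
      rw [hFfun, hasGradientAt_iff_hasFDerivAt]
      exact h2.congr_fderiv (by simp [map_sum])
    exact (hgF x).unique h3
  have hgFlip : ∀ x y' : EuclideanSpace ℝ (Fin d), ‖gF x - gF y'‖ ≤ L * ‖x - y'‖ := by
    intro x y'
    have hn0 : (0:ℝ) < n := by exact_mod_cast hn
    rw [hgFeq x, hgFeq y', ← smul_sub, ← Finset.sum_sub_distrib, norm_smul, Real.norm_eq_abs,
      abs_of_nonneg (by positivity : (0:ℝ) ≤ (n:ℝ)⁻¹)]
    have h1 : ‖∑ j, (g j x - g j y')‖ ≤ (n:ℝ) * (L * ‖x - y'‖) := by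
      refine le_trans (norm_sum_le _ _) ?_
      have := Finset.sum_le_sum (fun j (_ : j ∈ Finset.univ) => hsmooth j x y')
      simpa using this
    calc (n:ℝ)⁻¹ * ‖∑ j, (g j x - g j y')‖ ≤ (n:ℝ)⁻¹ * ((n:ℝ) * (L * ‖x - y'‖)) :=
          mul_le_mul_of_nonneg_left h1 (by positivity)
      _ = L * ‖x - y'‖ := by field_simp
  -- pointwise (per ω) inequality
  have key : ∀ ω, α * ⟪z - u, vh ω⟫ - α * h u ≤
      ((α / τ₁) * (P xplus - P (yplus ω) + τ₂ * P xtil - τ₂ * F xplus -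
            τ₂ * ⟪gF xplus, xtil - xplus⟫) +
          (α / τ₁) * (1 - τ₁ - τ₂) * h y - (α / τ₁) * h xplus +
          (1 / 2) * ‖z - u‖ ^ 2 - ((1 + α * σ) / 2) * ‖zplus ω - u‖ ^ 2) +
      (α ^ 2 * ‖v ω - gF xplus‖ ^ 2 + 3 / 2 * α ^ 2 * ‖vh ω - v ω‖ ^ 2
        - α / τ₁ * (τ₂ * D)) := by
    intro ω
    -- (A) mirror step: strong-convexity growth at the minimizer
    have hμ0 : (0:ℝ) ≤ 1 / (2 * α) := le_of_lt (one_div_pos.mpr (by linarith))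
    have hM := alpc_mirror_growth hμ0 hσ hstrong (vh ω) z (zplus ω) (hzplus ω) u
    have hMα := mul_le_mul_of_nonneg_left hM hαpos.le
    rw [norm_sub_rev u (zplus ω), norm_sub_rev u z] at hMα
    rw [eMgen (‖zplus ω - z‖ ^ 2) ⟪vh ω, zplus ω⟫ (h (zplus ω)) (‖zplus ω - u‖ ^ 2),
      eM2gen (‖z - u‖ ^ 2) ⟪vh ω, u⟫ (h u)] at hMα
    -- (B) gradient step: minimality at the Katyusha point w
    have hI2 : 2 * L * ‖yplus ω - xplus‖ ^ 2 + ⟪v ω, yplus ω⟫ + h (yplus ω) ≤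
        2 * L * ‖(τ₁ • zplus ω + τ₂ • xtil + (1 - τ₁ - τ₂) • y) - xplus‖ ^ 2 +
        ⟪v ω, τ₁ • zplus ω + τ₂ • xtil + (1 - τ₁ - τ₂) • y⟫ +
        h (τ₁ • zplus ω + τ₂ • xtil + (1 - τ₁ - τ₂) • y) :=
      isMinOn_iff.mp (hyplus ω) _ (Set.mem_univ _)
    have ehw : (τ₁ • zplus ω + τ₂ • xtil + (1 - τ₁ - τ₂) • y) - xplus
        = τ₁ • (zplus ω - z) := by
      rw [hxplus]; module
    have ehw' : 2 * L * ‖(τ₁ • zplus ω + τ₂ • xtil + (1 - τ₁ - τ₂) • y) - xplus‖ ^ 2 =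
        2 * L * (τ₁ ^ 2 * ‖zplus ω - z‖ ^ 2) := by
      rw [ehw, norm_smul, Real.norm_eq_abs, mul_pow, sq_abs]
    have e5 : ⟪v ω, τ₁ • zplus ω + τ₂ • xtil + (1 - τ₁ - τ₂) • y⟫ =
        ⟪v ω, xplus⟫ + τ₁ * ⟪v ω, zplus ω⟫ - τ₁ * ⟪v ω, z⟫ := by
      have e : τ₁ • zplus ω + τ₂ • xtil + (1 - τ₁ - τ₂) • y
          = xplus + τ₁ • (zplus ω - z) := by rw [hxplus]; module
      rw [e, inner_add_right, real_inner_smul_right, inner_sub_right]; ring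
    have hI3 := alpc_convex3 hconvh hτ₁pos.le hτ₂0 hrest0 (by ring) (zplus ω) xtil y
    have hI4 := alpc_descent hL hgF hgFlip xplus (yplus ω)
    have eI4 : ⟪gF xplus, yplus ω - xplus⟫ = ⟪gF xplus, yplus ω⟫ - ⟪gF xplus, xplus⟫ :=
      inner_sub_right _ _ _
    have e5a : ⟪v ω - gF xplus, xplus - yplus ω⟫ =
        ⟪v ω, xplus⟫ - ⟪v ω, yplus ω⟫ - ⟪gF xplus, xplus⟫ + ⟪gF xplus, yplus ω⟫ := by
      simp only [inner_sub_left, inner_sub_right]; ring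
    have hY1 : ⟪v ω - gF xplus, xplus - yplus ω⟫ ≤ ‖v ω - gF xplus‖ * ‖yplus ω - xplus‖ := by
      rw [show ‖yplus ω - xplus‖ = ‖xplus - yplus ω‖ from norm_sub_rev _ _]
      exact real_inner_le_norm _ _
    have hY2 : ‖v ω - gF xplus‖ * ‖yplus ω - xplus‖ ≤
        1 / (6 * L) * ‖v ω - gF xplus‖ ^ 2 + 3 * L / 2 * ‖yplus ω - xplus‖ ^ 2 :=
      hYgen _ _
    have hB2 : τ₁ * ⟪v ω, z⟫ - τ₁ * ⟪v ω, zplus ω⟫ ≤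
        F xplus - F (yplus ω) + 1 / (6 * L) * ‖v ω - gF xplus‖ ^ 2 +
        2 * L * (τ₁ ^ 2 * ‖zplus ω - z‖ ^ 2) + τ₁ * h (zplus ω) + τ₂ * h xtil +
        (1 - τ₁ - τ₂) * h y - h (yplus ω) := by
      linarith [hI2, ehw', e5, hI3, hI4, eI4, hY1, hY2, e5a]
    have hBs := mul_le_mul_of_nonneg_left hB2 (le_of_lt (div_pos hαpos hτ₁pos))
    rw [eB1gen ⟪v ω, z⟫ ⟪v ω, zplus ω⟫,
      eB2gen (F xplus) (F (yplus ω)) (h (yplus ω)) (‖v ω - gF xplus‖ ^ 2)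
        (‖zplus ω - z‖ ^ 2) (h (zplus ω)) (h xtil) (h y)] at hBs
    -- (C) Young's inequality for the estimator difference
    have hI6 : α * ⟪vh ω - v ω, z - zplus ω⟫ ≤
        3 / 2 * α ^ 2 * ‖vh ω - v ω‖ ^ 2 + 1 / 6 * ‖zplus ω - z‖ ^ 2 := by
      have h1 : ⟪vh ω - v ω, z - zplus ω⟫ ≤ ‖vh ω - v ω‖ * ‖zplus ω - z‖ := by
        rw [show ‖zplus ω - z‖ = ‖z - zplus ω‖ from norm_sub_rev _ _]
        exact real_inner_le_norm _ _
      have h2 := mul_le_mul_of_nonneg_left h1 hαpos.le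
      nlinarith [sq_nonneg (3 * α * ‖vh ω - v ω‖ - ‖zplus ω - z‖)]
    have eI6 : α * ⟪vh ω - v ω, z - zplus ω⟫ =
        α * ⟪vh ω, z⟫ - α * ⟪vh ω, zplus ω⟫ - α * ⟪v ω, z⟫ + α * ⟪v ω, zplus ω⟫ := by
      simp only [inner_sub_left, inner_sub_right]; ring
    rw [eI6] at hI6
    have eflip : α * ⟪z - u, vh ω⟫ = α * ⟪vh ω, z⟫ - α * ⟪vh ω, u⟫ := by
      rw [real_inner_comm, inner_sub_right]; ring
    have eR : (α / τ₁) * (P xplus - P (yplus ω) + τ₂ * P xtil - τ₂ * F xplus -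
          τ₂ * ⟪gF xplus, xtil - xplus⟫) +
        (α / τ₁) * (1 - τ₁ - τ₂) * h y - (α / τ₁) * h xplus +
        (1 / 2) * ‖z - u‖ ^ 2 - ((1 + α * σ) / 2) * ‖zplus ω - u‖ ^ 2 =
        α / τ₁ * F xplus - α / τ₁ * F (yplus ω) - α / τ₁ * h (yplus ω) +
        α / τ₁ * (τ₂ * h xtil) + α / τ₁ * (τ₂ * D) + α / τ₁ * ((1 - τ₁ - τ₂) * h y) +
        1 / 2 * ‖z - u‖ ^ 2 - (1 + α * σ) / 2 * ‖zplus ω - u‖ ^ 2 := by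
      simp only [hP, hD]; ring
    rw [eflip, eR]
    linarith [hMα, hBs, hI6]
  -- integrability facts
  have hinner : Integrable (fun ω => ⟪z - u, vh ω⟫) := Integrable.const_inner (z - u) hvhint
  have hLHSint : Integrable (fun ω => α * ⟪z - u, vh ω⟫ - α * h u) :=
    (hinner.const_mul α).sub (integrable_const _)
  have hz2 : Integrable (fun ω => ‖zplus ω - u‖ ^ 2) := by
    refine Integrable.mono' ((hzplusint.const_mul 2).add (integrable_const (2 * ‖u‖ ^ 2)))
      ((((hzplusmeas.sub measurable_const).norm).pow_const 2).aestronglyMeasurable) ?_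
    filter_upwards with ω
    simp only [Pi.add_apply]
    rw [Real.norm_eq_abs, abs_of_nonneg (by positivity)]
    have h1 : ‖zplus ω - u‖ ≤ ‖zplus ω‖ + ‖u‖ := norm_sub_le _ _
    have h2 : ‖zplus ω - u‖ ^ 2 ≤ (‖zplus ω‖ + ‖u‖) ^ 2 :=
      pow_le_pow_left₀ (norm_nonneg _) h1 2
    have h3 : (0:ℝ) ≤ (‖zplus ω‖ - ‖u‖) ^ 2 := sq_nonneg _
    linarith
  have hRfint : Integrable (fun ω => (α / τ₁) * (P xplus - P (yplus ω) + τ₂ * P xtil -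
      τ₂ * F xplus - τ₂ * ⟪gF xplus, xtil - xplus⟫) +
      (α / τ₁) * (1 - τ₁ - τ₂) * h y - (α / τ₁) * h xplus +
      (1 / 2) * ‖z - u‖ ^ 2 - ((1 + α * σ) / 2) * ‖zplus ω - u‖ ^ 2) := by
    have hfun : (fun ω => (α / τ₁) * (P xplus - P (yplus ω) + τ₂ * P xtil -
        τ₂ * F xplus - τ₂ * ⟪gF xplus, xtil - xplus⟫) +
        (α / τ₁) * (1 - τ₁ - τ₂) * h y - (α / τ₁) * h xplus +
        (1 / 2) * ‖z - u‖ ^ 2 - ((1 + α * σ) / 2) * ‖zplus ω - u‖ ^ 2) =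
        fun ω => (((α / τ₁) * (P xplus + τ₂ * P xtil - τ₂ * F xplus -
          τ₂ * ⟪gF xplus, xtil - xplus⟫) + (α / τ₁) * (1 - τ₁ - τ₂) * h y -
          (α / τ₁) * h xplus + (1 / 2) * ‖z - u‖ ^ 2) - (α / τ₁) * P (yplus ω)) -
          ((1 + α * σ) / 2) * ‖zplus ω - u‖ ^ 2 := by
      funext ω; ring
    rw [hfun]
    exact ((integrable_const _).sub (hyplusint.const_mul _)).sub (hz2.const_mul _)
  have hErrint : Integrable (fun ω => α ^ 2 * ‖v ω - gF xplus‖ ^ 2 +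
      3 / 2 * α ^ 2 * ‖vh ω - v ω‖ ^ 2 - α / τ₁ * (τ₂ * D)) :=
    ((hvint.const_mul _).add (hdiffint.const_mul _)).sub (integrable_const _)
  have hRHSint : Integrable (fun ω => ((α / τ₁) * (P xplus - P (yplus ω) + τ₂ * P xtil -
      τ₂ * F xplus - τ₂ * ⟪gF xplus, xtil - xplus⟫) +
      (α / τ₁) * (1 - τ₁ - τ₂) * h y - (α / τ₁) * h xplus +
      (1 / 2) * ‖z - u‖ ^ 2 - ((1 + α * σ) / 2) * ‖zplus ω - u‖ ^ 2) +
      (α ^ 2 * ‖v ω - gF xplus‖ ^ 2 + 3 / 2 * α ^ 2 * ‖vh ω - v ω‖ ^ 2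
        - α / τ₁ * (τ₂ * D))) := by exact hRfint.add hErrint
  -- the value of the left-hand side integral
  have hEL : ∫ ω, (α * ⟪z - u, vh ω⟫ - α * h u) = α * ⟪gF xplus, z - u⟫ - α * h u := by
    rw [integral_sub (hinner.const_mul α) (integrable_const _), integral_const_mul,
      integral_inner hvhint, hvhmean, integral_const]
    simp only [measure_univ, probReal_univ, ENNReal.toReal_one, smul_eq_mul, one_mul]
    rw [real_inner_comm]
  have hmono := integral_mono hLHSint hRHSint key
  have hsplit : ∫ ω, (((α / τ₁) * (P xplus - P (yplus ω) + τ₂ * P xtil -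
      τ₂ * F xplus - τ₂ * ⟪gF xplus, xtil - xplus⟫) +
      (α / τ₁) * (1 - τ₁ - τ₂) * h y - (α / τ₁) * h xplus +
      (1 / 2) * ‖z - u‖ ^ 2 - ((1 + α * σ) / 2) * ‖zplus ω - u‖ ^ 2) +
      (α ^ 2 * ‖v ω - gF xplus‖ ^ 2 + 3 / 2 * α ^ 2 * ‖vh ω - v ω‖ ^ 2
        - α / τ₁ * (τ₂ * D))) ≤
      ∫ ω, ((α / τ₁) * (P xplus - P (yplus ω) + τ₂ * P xtil - τ₂ * F xplus -
            τ₂ * ⟪gF xplus, xtil - xplus⟫) +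
          (α / τ₁) * (1 - τ₁ - τ₂) * h y - (α / τ₁) * h xplus +
          (1 / 2) * ‖z - u‖ ^ 2 - ((1 + α * σ) / 2) * ‖zplus ω - u‖ ^ 2) := by
    rw [integral_add hRfint hErrint]
    have hE : ∫ ω, (α ^ 2 * ‖v ω - gF xplus‖ ^ 2 + 3 / 2 * α ^ 2 * ‖vh ω - v ω‖ ^ 2
        - α / τ₁ * (τ₂ * D)) ≤ 0 := by
      have hiadd : Integrable (fun ω => α ^ 2 * ‖v ω - gF xplus‖ ^ 2 +
          3 / 2 * α ^ 2 * ‖vh ω - v ω‖ ^ 2) := by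
        exact (hvint.const_mul _).add (hdiffint.const_mul _)
      rw [integral_sub hiadd (integrable_const _),
        integral_add (hvint.const_mul (α ^ 2)) (hdiffint.const_mul (3 / 2 * α ^ 2)),
        integral_const_mul, integral_const_mul, integral_const]
      simp only [measure_univ, probReal_univ, ENNReal.toReal_one, smul_eq_mul, one_mul]
      have hbudget : α ^ 2 * (4 * L * ζ * D) +
          3 / 2 * α ^ 2 * (4 * L * (ζ + 1 / (2 * (B:ℝ))) * D) = α / τ₁ * (τ₂ * D) := by
        rw [hτ₂, hα]; field_simp; ring
      have b1 := mul_le_mul_of_nonneg_left hvvar (sq_nonneg α)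
      have b2 := mul_le_mul_of_nonneg_left hdiffvar
        (by positivity : (0:ℝ) ≤ 3 / 2 * α ^ 2)
      linarith
    linarith
  calc α * ⟪gF xplus, z - u⟫ - α * h u
      = ∫ ω, (α * ⟪z - u, vh ω⟫ - α * h u) := hEL.symm
    _ ≤ _ := hmono
    _ ≤ _ := hsplit
end

section
/- Let f₁, …, f_n : ℝ^d → ℝ be differentiable and each L-smooth, f(x) = (1/n)∑_{j=1}^n f_j(x), and h : ℝ^d → ℝ convex, with P = f + h attaining its minimum at x*. Let Θ ≥ 0, η = ρ/L with 0 < ρ < 1/2, and suppose 8m²ρ²Θ + ρ ≤ 1. On a probability space, let random iterates be defined by: x̃⁰ = x⁰; for each epoch s = 0,…,S−1, x₀^{s+1} = x̃^s, and for t = 0,…,m−1, x_{t+1}^{s+1} = prox_{ηh}(x_t^{s+1} − η v_t^{s+1}) where the random gradient estimates satisfy E‖v_t^{s+1} − ∇f(x_t^{s+1})‖² ≤ 2L²Θ·E‖x_t^{s+1} − x̃^s‖² together with the expectation inequality E[P(x_{t+1}^{s+1})] ≤ E[P(x_t^{s+1}) + (η/2)‖v_t^{s+1} − ∇f(x_t^{s+1})‖²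 + (L − 1/(2η))‖x̄_{t+1}^{s+1} − x_t^{s+1}‖² + (L/2 − 1/(2η))‖x_{t+1}^{s+1} − x_t^{s+1}‖²], where x̄_{t+1}^{s+1} = prox_{ηh}(x_t^{s+1} − η∇f(x_t^{s+1})); and x̃^{s+1} = x_m^{s+1}. Then with T = Sm, (1/T)·∑_{s=0}^{S−1}∑_{t=0}^{m−1} E‖G_η(x_t^{s+1})‖² ≤ 2L(P(x⁰) − P(x*))/(ρ(1 − 2ρ)T). In particular, taking Θ = d·λ²/(4(2^{b−1}−1)²) + d_λ(1−λ)² + 1/(NB) gives the convergence guarantee of LPC-SVRG under communication schemes (a) and (b), and Θ = 3d·λ²/(8(2^{b−1}−1)²) + d_λ(1−λ)² + 1/(NB) gives the guarantee under scheme (c). -/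
/-!
Summing the descent inequality over an epoch telescopes `E P`. Since
`x_t - x̃ = ∑_{i<t} (x_{i+1} - x_i)`, Cauchy–Schwarz and the variance bound control the variance
terms of the epoch by `2L²Θm² ∑ E‖x_{i+1} - x_i‖²`, and the constraint `8m²ρ²Θ + ρ ≤ 1` makes
the negative coefficient `L/2 - 1/(2η)` of the step lengths absorb them. What is left is
`(1/(2η) - L) ∑_t E‖x̄_{t+1} - x_t‖² ≤ E P(x̃^s) - E P(x̃^{s+1})`; telescoping over the epochs,
`P(x̃^S) ≥ P(x*)` and `G_η(x_t) = (x_t - x̄_{t+1})/η` give the bound.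
-/

open MeasureTheory Finset
open scoped ProbabilityTheory

lemma sum_range_mul_sum_range_le_sq_mul_sum {C : ℕ → ℝ} (hC : ∀ t, 0 ≤ C t) (m : ℕ) :
    ∑ t ∈ range m, (t : ℝ) * ∑ i ∈ range t, C i ≤ (m : ℝ) ^ 2 * ∑ t ∈ range m, C t := by
  calc ∑ t ∈ range m, (t : ℝ) * ∑ i ∈ range t, C i
      ≤ ∑ _t ∈ range m, (m : ℝ) * ∑ i ∈ range m, C i := by
        refine sum_le_sum fun t ht => ?_
        have htm : t ≤ m := (mem_range.1 ht).le
        gcongr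
        · exact sum_nonneg fun i _ => hC i
        · exact fun i _ _ => hC i
    _ = (m : ℝ) ^ 2 * ∑ t ∈ range m, C t := by
        rw [sum_const, card_range, nsmul_eq_mul]; ring

lemma sq_norm_sub_le_mul_sum_sq_norm_succ_sub {E : Type*} [SeminormedAddCommGroup E]
    (x : ℕ → E) (t : ℕ) :
    ‖x t - x 0‖ ^ 2 ≤ t * ∑ i ∈ range t, ‖x (i + 1) - x i‖ ^ 2 := by
  calc ‖x t - x 0‖ ^ 2 = ‖∑ i ∈ range t, (x (i + 1) - x i)‖ ^ 2 := by rw [sum_range_sub]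
    _ ≤ (∑ i ∈ range t, ‖x (i + 1) - x i‖) ^ 2 := by gcongr; exact norm_sum_le _ _
    _ ≤ t * ∑ i ∈ range t, ‖x (i + 1) - x i‖ ^ 2 := by
        simpa using sq_sum_le_card_mul_sum_sq (s := range t) (f := fun i => ‖x (i + 1) - x i‖)

lemma integral_sq_norm_sub_le_mul_sum {Ω E : Type*} [MeasurableSpace Ω] {μ : Measure Ω}
    [NormedAddCommGroup E] (x : ℕ → Ω → E) (t : ℕ)
    (hstep : ∀ i < t, Integrable (fun ω => ‖x (i + 1) ω - x i ω‖ ^ 2) μ) :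
    ∫ ω, ‖x t ω - x 0 ω‖ ^ 2 ∂μ ≤ t * ∑ i ∈ range t, ∫ ω, ‖x (i + 1) ω - x i ω‖ ^ 2 ∂μ := by
  have hstep' : ∀ i ∈ range t, Integrable (fun ω => ‖x (i + 1) ω - x i ω‖ ^ 2) μ :=
    fun i hi => hstep i (mem_range.1 hi)
  rw [← integral_finsetSum _ hstep', ← integral_const_mul]
  exact integral_mono_of_nonneg (.of_forall fun ω => by positivity)
    ((integrable_finsetSum _ hstep').const_mul _)
    (.of_forall fun ω => sq_norm_sub_le_mul_sum_sq_norm_succ_sub (x · ω) t)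

lemma mul_sum_le_sub_of_descent {m : ℕ} {L ρ η Θ : ℝ} (hL : 0 < L) (hρ0 : 0 < ρ)
    (hη : η = ρ / L) (hΘ : 0 ≤ Θ) (hcon : 8 * (m : ℝ) ^ 2 * ρ ^ 2 * Θ + ρ ≤ 1)
    {A V B C : ℕ → ℝ}
    (hstep : ∀ t < m, A (t + 1) ≤ A t + (η / 2) * V t + (L - 1 / (2 * η)) * B t
      + (L / 2 - 1 / (2 * η)) * C t)
    (hV : ∑ t ∈ range m, V t ≤ 2 * L ^ 2 * Θ * (m : ℝ) ^ 2 * ∑ t ∈ range m, C t)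
    (hC : 0 ≤ ∑ t ∈ range m, C t) :
    L * (1 - 2 * ρ) / (2 * ρ) * ∑ t ∈ range m, B t ≤ A 0 - A m := by
  have hη0 : 0 < η := by rw [hη]; positivity
  have hinv : 1 / (2 * η) = L / (2 * ρ) := by rw [hη]; field_simp
  have htel : A m - A 0 ≤ (η / 2) * ∑ t ∈ range m, V t + (L - 1 / (2 * η)) * ∑ t ∈ range m, B t
      + (L / 2 - 1 / (2 * η)) * ∑ t ∈ range m, C t := by
    rw [← sum_range_sub, mul_sum, mul_sum, mul_sum, ← sum_add_distrib, ← sum_add_distrib]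
    exact sum_le_sum fun t ht => by linarith [hstep t (mem_range.1 ht)]
  have hVη := mul_le_mul_of_nonneg_left hV (by positivity : 0 ≤ η / 2)
  have hcoef : η / 2 * (2 * L ^ 2 * Θ * (m : ℝ) ^ 2) + (L / 2 - 1 / (2 * η)) ≤ 0 := by
    have hfac : η / 2 * (2 * L ^ 2 * Θ * (m : ℝ) ^ 2) + (L / 2 - 1 / (2 * η))
        = L / (2 * ρ) * (2 * ρ ^ 2 * Θ * (m : ℝ) ^ 2 + ρ - 1) := by
      rw [hinv, hη]; field_simp; ring
    rw [hfac]
    refine mul_nonpos_of_nonneg_of_nonpos (by positivity) ?_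
    nlinarith [mul_nonneg (mul_nonneg (sq_nonneg ρ) hΘ) (sq_nonneg (m : ℝ))]
  have hCterm := mul_nonpos_of_nonpos_of_nonneg hcoef hC
  have hK : L * (1 - 2 * ρ) / (2 * ρ) = 1 / (2 * η) - L := by rw [hinv]; field_simp
  rw [hK]
  linarith

lemma mul_sum_integral_le_sub_of_descent {Ω E : Type*} [MeasurableSpace Ω] {μ : Measure Ω}
    [NormedAddCommGroup E] {m : ℕ} {L ρ η Θ : ℝ} (hL : 0 < L) (hρ0 : 0 < ρ)
    (hη : η = ρ / L) (hΘ : 0 ≤ Θ) (hcon : 8 * (m : ℝ) ^ 2 * ρ ^ 2 * Θ + ρ ≤ 1)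
    (P : E → ℝ) (gF : E → E) (x v xbar : ℕ → Ω → E)
    (hintP : ∀ t < m, Integrable (fun ω => P (x t ω)) μ)
    (hintv : ∀ t < m, Integrable (fun ω => ‖v t ω - gF (x t ω)‖ ^ 2) μ)
    (hintxbar : ∀ t < m, Integrable (fun ω => ‖xbar (t + 1) ω - x t ω‖ ^ 2) μ)
    (hintstep : ∀ t < m, Integrable (fun ω => ‖x (t + 1) ω - x t ω‖ ^ 2) μ)
    (hvar : ∀ t < m,
      ∫ ω, ‖v t ω - gF (x t ω)‖ ^ 2 ∂μ ≤ 2 * L ^ 2 * Θ * ∫ ω, ‖x t ω - x 0 ω‖ ^ 2 ∂μ)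
    (hdescent : ∀ t < m,
      ∫ ω, P (x (t + 1) ω) ∂μ ≤
        ∫ ω, (P (x t ω) + (η / 2) * ‖v t ω - gF (x t ω)‖ ^ 2 +
          (L - 1 / (2 * η)) * ‖xbar (t + 1) ω - x t ω‖ ^ 2 +
          (L / 2 - 1 / (2 * η)) * ‖x (t + 1) ω - x t ω‖ ^ 2) ∂μ) :
    L * (1 - 2 * ρ) / (2 * ρ) * ∑ t ∈ range m, ∫ ω, ‖xbar (t + 1) ω - x t ω‖ ^ 2 ∂μ ≤
      ∫ ω, P (x 0 ω) ∂μ - ∫ ω, P (x m ω) ∂μ := by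
  set C : ℕ → ℝ := fun t => ∫ ω, ‖x (t + 1) ω - x t ω‖ ^ 2 ∂μ
  refine mul_sum_le_sub_of_descent hL hρ0 hη hΘ hcon (A := fun t => ∫ ω, P (x t ω) ∂μ)
    (V := fun t => ∫ ω, ‖v t ω - gF (x t ω)‖ ^ 2 ∂μ)
    (B := fun t => ∫ ω, ‖xbar (t + 1) ω - x t ω‖ ^ 2 ∂μ) (C := C) (fun t ht => ?_) ?_
    (sum_nonneg fun t _ => integral_nonneg fun ω => by positivity)
  · have hiP := hintP t ht
    have hiV := (hintv t ht).const_mul (η / 2)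
    have hiB := (hintxbar t ht).const_mul (L - 1 / (2 * η))
    have hiC := (hintstep t ht).const_mul (L / 2 - 1 / (2 * η))
    refine (hdescent t ht).trans_eq ?_
    rw [integral_add ?_ hiC, integral_add ?_ hiB, integral_add hiP hiV, integral_const_mul,
      integral_const_mul, integral_const_mul]
    exacts [hiP.add hiV, (hiP.add hiV).add hiB]
  · calc ∑ t ∈ range m, ∫ ω, ‖v t ω - gF (x t ω)‖ ^ 2 ∂μ
        ≤ ∑ t ∈ range m, 2 * L ^ 2 * Θ * ((t : ℝ) * ∑ i ∈ range t, C i) := by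
          refine sum_le_sum fun t ht => (hvar t (mem_range.1 ht)).trans ?_
          gcongr
          exact integral_sq_norm_sub_le_mul_sum x t
            fun i hi => hintstep i (hi.trans (mem_range.1 ht))
      _ ≤ 2 * L ^ 2 * Θ * ((m : ℝ) ^ 2 * ∑ t ∈ range m, C t) := by
          rw [← mul_sum]
          gcongr
          exact sum_range_mul_sum_range_le_sq_mul_sum
            (fun t => integral_nonneg fun ω => by positivity) m
      _ = 2 * L ^ 2 * Θ * (m : ℝ) ^ 2 * ∑ t ∈ range m, C t := by ring

lemma one_div_mul_sq_one_div_mul_le {L ρ η B Δ T : ℝ} (hL : 0 < L) (hρ0 : 0 < ρ)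
    (hρ : ρ < 1 / 2) (hη : η = ρ / L) (hT : 0 ≤ T) (hB : L * (1 - 2 * ρ) / (2 * ρ) * B ≤ Δ) :
    1 / T * ((1 / η) ^ 2 * B) ≤ 2 * L * Δ / (ρ * (1 - 2 * ρ) * T) := by
  have hρ2 : 0 < 1 - 2 * ρ := by linarith
  have hscale : (1 / η) ^ 2 = 2 * L / (ρ * (1 - 2 * ρ)) * (L * (1 - 2 * ρ) / (2 * ρ)) := by
    have : 1 - ρ * 2 ≠ 0 := by linarith
    rw [hη]; field_simp
  rw [hscale, mul_assoc, one_div_mul_eq_div]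
  calc 2 * L / (ρ * (1 - 2 * ρ)) * (L * (1 - 2 * ρ) / (2 * ρ) * B) / T
      ≤ 2 * L / (ρ * (1 - 2 * ρ)) * Δ / T := by gcongr
    _ = 2 * L * Δ / (ρ * (1 - 2 * ρ) * T) := by rw [div_mul_eq_mul_div, div_div]

theorem lpc_svrg_convergence_general
    {Ω : Type*} [MeasureSpace Ω] [IsProbabilityMeasure (ℙ : Measure Ω)]
    {d m S : ℕ} (hS : 0 < S)
    (L ρ η Θ : ℝ) (hL : 0 < L) (hΘ : 0 ≤ Θ)
    (hρ0 : 0 < ρ) (hρ : ρ < 1 / 2) (hη : η = ρ / L)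
    (hconstraint : 8 * (m : ℝ) ^ 2 * ρ ^ 2 * Θ + ρ ≤ 1)
    (gF : EuclideanSpace ℝ (Fin d) → EuclideanSpace ℝ (Fin d))
    (P : EuclideanSpace ℝ (Fin d) → ℝ)
    (xstar : EuclideanSpace ℝ (Fin d)) (hstar : ∀ y, P xstar ≤ P y)
    (x0 : EuclideanSpace ℝ (Fin d))
    -- iterates: `xt t s = x_t^{s+1}`, snapshots `xtil s = x̃^s`, gradient estimates `v t s`,
    -- and `xbar (t+1) s = prox_{ηh}(x_t^{s+1} - η ∇f(x_t^{s+1}))`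
    (xt : ℕ → ℕ → Ω → EuclideanSpace ℝ (Fin d))
    (xtil : ℕ → Ω → EuclideanSpace ℝ (Fin d))
    (v : ℕ → ℕ → Ω → EuclideanSpace ℝ (Fin d))
    (xbar : ℕ → ℕ → Ω → EuclideanSpace ℝ (Fin d))
    (hxtil0 : ∀ ω, xtil 0 ω = x0)
    (hx0 : ∀ s < S, ∀ ω, xt 0 s ω = xtil s ω)
    (hxtilsucc : ∀ s < S, ∀ ω, xtil (s + 1) ω = xt m s ω)
    -- integrability of all quantities appearing in the expectations
    (hintP : ∀ s < S, ∀ t ≤ m, Integrable fun ω => P (xt t s ω))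
    (hintv : ∀ s < S, ∀ t < m, Integrable fun ω => ‖v t s ω - gF (xt t s ω)‖ ^ 2)
    (hintxbar : ∀ s < S, ∀ t < m, Integrable fun ω => ‖xbar (t + 1) s ω - xt t s ω‖ ^ 2)
    (hintstep : ∀ s < S, ∀ t < m, Integrable fun ω => ‖xt (t + 1) s ω - xt t s ω‖ ^ 2)
    -- the variance bound of the low-precision gradient estimates (Lemma 2)
    (hvar : ∀ s < S, ∀ t < m,
      ∫ ω, ‖v t s ω - gF (xt t s ω)‖ ^ 2 ≤ 2 * L ^ 2 * Θ * ∫ ω, ‖xt t s ω - xtil s ω‖ ^ 2)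
    -- the expected-descent inequality of the proximal gradient step
    (hdescent : ∀ s < S, ∀ t < m,
      (∫ ω, P (xt (t + 1) s ω)) ≤
        ∫ ω, (P (xt t s ω) + (η / 2) * ‖v t s ω - gF (xt t s ω)‖ ^ 2 +
          (L - 1 / (2 * η)) * ‖xbar (t + 1) s ω - xt t s ω‖ ^ 2 +
          (L / 2 - 1 / (2 * η)) * ‖xt (t + 1) s ω - xt t s ω‖ ^ 2)) :
    (1 / ((S : ℝ) * (m : ℝ))) *
        ∑ s ∈ Finset.range S, ∑ t ∈ Finset.range m,
          ∫ ω, ‖(1 / η) • (xt t s ω - xbar (t + 1) s ω)‖ ^ 2 ≤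
      2 * L * (P x0 - P xstar) / (ρ * (1 - 2 * ρ) * ((S : ℝ) * (m : ℝ))) := by
  set B := ∑ s ∈ range S, ∑ t ∈ range m, ∫ ω, ‖xbar (t + 1) s ω - xt t s ω‖ ^ 2
  have hepoch : ∀ s < S, L * (1 - 2 * ρ) / (2 * ρ) *
      ∑ t ∈ range m, ∫ ω, ‖xbar (t + 1) s ω - xt t s ω‖ ^ 2 ≤
        (∫ ω, P (xtil s ω)) - ∫ ω, P (xtil (s + 1) ω) := fun s hs => by
    simpa only [hx0 s hs, hxtilsucc s hs] using
      mul_sum_integral_le_sub_of_descent hL hρ0 hη hΘ hconstraint P gF (xt · s) (v · s)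
        (xbar · s) (fun t ht => hintP s hs t ht.le) (hintv s hs) (hintxbar s hs) (hintstep s hs)
        (by simpa only [hx0 s hs] using hvar s hs) (hdescent s hs)
  have hend : P xstar ≤ ∫ ω, P (xtil S ω) := by
    obtain ⟨s, rfl⟩ := Nat.exists_eq_add_one_of_ne_zero hS.ne'
    simp only [hxtilsucc s s.lt_succ_self]
    simpa using integral_mono (integrable_const (P xstar)) (hintP s s.lt_succ_self m le_rfl)
      fun ω => hstar _
  have hB : L * (1 - 2 * ρ) / (2 * ρ) * B ≤ P x0 - P xstar := by
    have htel := (sum_le_sum fun s hs => hepoch s (mem_range.1 hs)).trans_eq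
      (sum_range_sub' (fun s => ∫ ω, P (xtil s ω)) S)
    rw [← mul_sum] at htel
    simp only [hxtil0, integral_const, probReal_univ, one_smul] at htel
    linarith
  have hG : ∑ s ∈ range S, ∑ t ∈ range m, ∫ ω, ‖(1 / η) • (xt t s ω - xbar (t + 1) s ω)‖ ^ 2
      = (1 / η) ^ 2 * B := by
    simp only [B, mul_sum, ← integral_const_mul, norm_smul, mul_pow, norm_sub_rev (xt _ _ _),
      Real.norm_eq_abs, sq_abs]
  rw [hG]
  exact one_div_mul_sq_one_div_mul_le hL hρ0 hρ hη (by positivity) hB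

/-- **Convergence of LPC-SVRG (Theorem 2).**  With step size `η = ρ/L`, `0 < ρ < 1/2`,
parameter constraint `8m²ρ²Θ + ρ ≤ 1`, low-precision gradient estimates `v_t^{s+1}` whose
variance is bounded by `2L²Θ·E‖x_t^{s+1} - x̃^s‖²`, and the descent inequality of the smooth
step, the averaged squared gradient mapping of the iterates satisfies
`(1/T)∑_{s,t} E‖G_η(x_t^{s+1})‖² ≤ 2L(P(x⁰) - P(x*))/(ρ(1 - 2ρ)T)` where `T = Sm`.
Taking `Θ = dλ²/(4(2^{b-1}-1)²) + d_λ(1-λ)² + 1/(NB)` gives the guarantee under communication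
schemes (a), (b); taking `Θ = 3dλ²/(8(2^{b-1}-1)²) + d_λ(1-λ)² + 1/(NB)` gives scheme (c). -/
theorem lpc_svrg_convergence
    {Ω : Type*} [MeasureSpace Ω] [IsProbabilityMeasure (ℙ : Measure Ω)]
    {d n m S : ℕ} (hn : 0 < n) (hm : 0 < m) (hS : 0 < S)
    (L ρ η Θ : ℝ) (hL : 0 < L) (hΘ : 0 ≤ Θ)
    (hρ0 : 0 < ρ) (hρ : ρ < 1 / 2) (hη : η = ρ / L)
    (hconstraint : 8 * (m : ℝ) ^ 2 * ρ ^ 2 * Θ + ρ ≤ 1)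
    (f : Fin n → EuclideanSpace ℝ (Fin d) → ℝ)
    (g : Fin n → EuclideanSpace ℝ (Fin d) → EuclideanSpace ℝ (Fin d))
    (hgrad : ∀ j x, HasGradientAt (f j) (g j x) x)
    (hsmooth : ∀ j x y, ‖g j x - g j y‖ ≤ L * ‖x - y‖)
    (F : EuclideanSpace ℝ (Fin d) → ℝ) (hF : ∀ y, F y = (n : ℝ)⁻¹ * ∑ j, f j y)
    (gF : EuclideanSpace ℝ (Fin d) → EuclideanSpace ℝ (Fin d))
    (hgF : ∀ x, HasGradientAt F (gF x) x)
    (h : EuclideanSpace ℝ (Fin d) → ℝ) (hconvh : ConvexOn ℝ Set.univ h)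
    (P : EuclideanSpace ℝ (Fin d) → ℝ) (hP : ∀ y, P y = F y + h y)
    (xstar : EuclideanSpace ℝ (Fin d)) (hstar : ∀ y, P xstar ≤ P y)
    (x0 : EuclideanSpace ℝ (Fin d))
    -- iterates: `xt t s = x_t^{s+1}`, snapshots `xtil s = x̃^s`, gradient estimates `v t s`,
    -- and `xbar (t+1) s = prox_{ηh}(x_t^{s+1} - η ∇f(x_t^{s+1}))`
    (xt : ℕ → ℕ → Ω → EuclideanSpace ℝ (Fin d))
    (xtil : ℕ → Ω → EuclideanSpace ℝ (Fin d))
    (v : ℕ → ℕ → Ω → EuclideanSpace ℝ (Fin d))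
    (xbar : ℕ → ℕ → Ω → EuclideanSpace ℝ (Fin d))
    (hmeasx : ∀ t s, Measurable (xt t s)) (hmeasv : ∀ t s, Measurable (v t s))
    (hmeasxbar : ∀ t s, Measurable (xbar t s))
    (hxtil0 : ∀ ω, xtil 0 ω = x0)
    (hx0 : ∀ s < S, ∀ ω, xt 0 s ω = xtil s ω)
    (hxtilsucc : ∀ s < S, ∀ ω, xtil (s + 1) ω = xt m s ω)
    -- the proximal update `x_{t+1}^{s+1} = prox_{ηh}(x_t^{s+1} - η v_t^{s+1})`
    (hupdate : ∀ s < S, ∀ t < m, ∀ ω, IsMinOn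
      (fun y => h y + (1 / (2 * η)) * ‖y - (xt t s ω - η • v t s ω)‖ ^ 2)
      Set.univ (xt (t + 1) s ω))
    -- `x̄_{t+1}^{s+1} = prox_{ηh}(x_t^{s+1} - η ∇f(x_t^{s+1}))`
    (hxbar : ∀ s < S, ∀ t < m, ∀ ω, IsMinOn
      (fun y => h y + (1 / (2 * η)) * ‖y - (xt t s ω - η • gF (xt t s ω))‖ ^ 2)
      Set.univ (xbar (t + 1) s ω))
    -- integrability of all quantities appearing in the expectations
    (hintP : ∀ s < S, ∀ t ≤ m, Integrable fun ω => P (xt t s ω))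
    (hintdist : ∀ s < S, ∀ t ≤ m, Integrable fun ω => ‖xt t s ω - xtil s ω‖ ^ 2)
    (hintv : ∀ s < S, ∀ t < m, Integrable fun ω => ‖v t s ω - gF (xt t s ω)‖ ^ 2)
    (hintxbar : ∀ s < S, ∀ t < m, Integrable fun ω => ‖xbar (t + 1) s ω - xt t s ω‖ ^ 2)
    (hintstep : ∀ s < S, ∀ t < m, Integrable fun ω => ‖xt (t + 1) s ω - xt t s ω‖ ^ 2)
    -- the variance bound of the low-precision gradient estimates (Lemma 2)
    (hvar : ∀ s < S, ∀ t < m,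
      ∫ ω, ‖v t s ω - gF (xt t s ω)‖ ^ 2 ≤ 2 * L ^ 2 * Θ * ∫ ω, ‖xt t s ω - xtil s ω‖ ^ 2)
    -- the expected-descent inequality of the proximal gradient step
    (hdescent : ∀ s < S, ∀ t < m,
      (∫ ω, P (xt (t + 1) s ω)) ≤
        ∫ ω, (P (xt t s ω) + (η / 2) * ‖v t s ω - gF (xt t s ω)‖ ^ 2 +
          (L - 1 / (2 * η)) * ‖xbar (t + 1) s ω - xt t s ω‖ ^ 2 +
          (L / 2 - 1 / (2 * η)) * ‖xt (t + 1) s ω - xt t s ω‖ ^ 2)) :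
    (1 / ((S : ℝ) * (m : ℝ))) *
        ∑ s ∈ Finset.range S, ∑ t ∈ Finset.range m,
          ∫ ω, ‖(1 / η) • (xt t s ω - xbar (t + 1) s ω)‖ ^ 2 ≤
      2 * L * (P x0 - P xstar) / (ρ * (1 - 2 * ρ) * ((S : ℝ) * (m : ℝ))) :=
  lpc_svrg_convergence_general hS L ρ η Θ hL hΘ hρ0 hρ hη hconstraint gF P xstar hstar x0 xt xtil v
    xbar hxtil0 hx0 hxtilsucc hintP hintv hintxbar hintstep hvar hdescent
end

section
/- Let d, m, N, B be positive integers and let b be an integer with (2^{b−1} − 1)² ≥ d. Set λ = 1 (so that no coordinate exceeds the quantization codebook and d_λ = 0). Then every ρ with 0 < ρ ≤ 1/(6m) satisfies ρ < 1/2 and the constraint 8m²ρ²·[d·λ²/(4(2^{b−1}−1)²) + d_λ(1−λ)² + 1/(NB)] + ρ ≤ 1. Consequently, b = O(log √d) bits and step size η = ρ/L = O(1/(mL)) suffice to satisfy the parameter constraint of the LPC-SVRG convergence theorem. -/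
/-! With `λ = 1` the clipping term vanishes, the quantization term `d / (4 (2^{b-1}-1)²)` is at
most `1/4` once `(2^{b-1}-1)² ≥ d`, and `1/(NB) ≤ 1`, so the bracket is at most `5/4`.
Since `mρ ≤ 1/6`, the left-hand side is at most `8 · (1/36) · (5/4) + 1/6 = 4/9`. -/

lemma div_four_mul_le_quarter {x s : ℝ} (hs : 0 ≤ s) (hxs : x ≤ s) : x / (4 * s) ≤ 1 / 4 := by
  rw [mul_comm, ← div_div]
  exact div_le_div_of_nonneg_right (div_le_one_of_le₀ hxs hs) (by norm_num)

lemma one_div_natCast_mul_le_one (N B : ℕ) : 1 / ((N : ℝ) * B) ≤ 1 := by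
  rw [one_div, ← Nat.cast_mul]
  exact Nat.cast_inv_le_one _

lemma mul_le_one_of_le_one_div {ρ c : ℝ} (hρ : 0 < ρ) (h : ρ ≤ 1 / c) : ρ * c ≤ 1 :=
  (le_div_iff₀ (one_div_pos.mp (hρ.trans_le h))).mp h

lemma eight_mul_sq_mul_add_le_one {x ρ c : ℝ} (hx₀ : 0 ≤ x) (hx : x ≤ 1 / 6) (hρ : ρ ≤ 1 / 6)
    (hc₀ : 0 ≤ c) (hc : c ≤ 5 / 4) : 8 * x ^ 2 * c + ρ ≤ 1 := by
  have hx2 : x ^ 2 ≤ 1 / 36 := by nlinarith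
  have : 8 * x ^ 2 * c ≤ 8 * (1 / 36) * (5 / 4) := by gcongr
  linarith

theorem lpc_svrg_parameter_constraint_satisfiable_general
    (d m N B : ℕ)
    (b : ℕ) (hb : (d : ℝ) ≤ ((2 : ℝ) ^ (b - 1) - 1) ^ 2) :
    ∀ ρ : ℝ, 0 < ρ → ρ ≤ 1 / (6 * (m : ℝ)) →
      ρ < 1 / 2 ∧
        8 * (m : ℝ) ^ 2 * ρ ^ 2 *
            ((d : ℝ) * (1 : ℝ) ^ 2 / (4 * ((2 : ℝ) ^ (b - 1) - 1) ^ 2) +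
              (0 : ℝ) * (1 - (1 : ℝ)) ^ 2 + 1 / ((N : ℝ) * (B : ℝ))) + ρ ≤ 1 := by
  intro ρ hρ hρm
  have hm : (1 : ℝ) ≤ m := Nat.one_le_cast.mpr <| Nat.pos_of_ne_zero <| by
    rintro rfl
    norm_num at hρm
    linarith
  have hmρ : (m : ℝ) * ρ ≤ 1 / 6 := by
    have := mul_le_one_of_le_one_div hρ hρm
    linarith
  have hρ6 : ρ ≤ 1 / 6 := by nlinarith
  have hquant := div_four_mul_le_quarter (sq_nonneg ((2 : ℝ) ^ (b - 1) - 1)) hb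
  have hbatch := one_div_natCast_mul_le_one N B
  refine ⟨by linarith, ?_⟩
  rw [show 8 * (m : ℝ) ^ 2 * ρ ^ 2 = 8 * (m * ρ) ^ 2 by ring, one_pow, mul_one, zero_mul, add_zero]
  exact eight_mul_sq_mul_add_le_one (by positivity) hmρ hρ6 (by positivity) (by linarith)

/-- **Corollary 1.** If `(2^{b-1} - 1)² ≥ d` (i.e. `b = O(log √d)` bits) and `λ = 1`
(so that no coordinate is clipped and `d_λ = 0`), then every `ρ` with `0 < ρ ≤ 1/(6m)`
(i.e. step size `η = ρ/L = O(1/(mL))`) satisfies `ρ < 1/2` and the LPC-SVRG parameter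
constraint `8m²ρ²[dλ²/(4(2^{b-1}-1)²) + d_λ(1-λ)² + 1/(NB)] + ρ ≤ 1`. -/
theorem lpc_svrg_parameter_constraint_satisfiable
    (d m N B : ℕ) (hd : 0 < d) (hm : 0 < m) (hN : 0 < N) (hB : 0 < B)
    (b : ℕ) (hb : (d : ℝ) ≤ ((2 : ℝ) ^ (b - 1) - 1) ^ 2) :
    ∀ ρ : ℝ, 0 < ρ → ρ ≤ 1 / (6 * (m : ℝ)) →
      ρ < 1 / 2 ∧
        8 * (m : ℝ) ^ 2 * ρ ^ 2 *
            ((d : ℝ) * (1 : ℝ) ^ 2 / (4 * ((2 : ℝ) ^ (b - 1) - 1) ^ 2) +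
              (0 : ℝ) * (1 - (1 : ℝ)) ^ 2 + 1 / ((N : ℝ) * (B : ℝ))) + ρ ≤ 1 :=
  lpc_svrg_parameter_constraint_satisfiable_general d m N B b hb
end
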